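/- arXiv:1508.05140 — 6 statements merged into one kernel-verified Lean document; each statement's English description precedes it below -/
import Mathlib

section
/- Suppose α < 1. Then D(z,w) < ∞ for all z, w ∈ ℝ^d, and D is a metric on ℝ^d: it is symmetric, satisfies the triangle inequality, and D(z,w) = 0 if and only if z = w. Moreover, writing B_r^D(0) := {z ∈ ℝ^d : D(0,z) ≤ r}, one has B_r^D(0) = r^{1/(1−α)} · B_1^D(0) for every r > 0. -/
/-!
Every property is read off from paths. `Dmet` is the largest function below `segLen` that vanishes
on the diagonal and satisfies the triangle inequality; this gives symmetry (reversed segments have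
the same length) and the triangle inequality itself (paths concatenate). Since `f` is
`α`-homogeneous, scaling a path by `c` multiplies its length by `c ^ (1 - α)`, which scales the
balls; homogeneity also makes `t ↦ f (t • z)⁻¹ = t ^ (-α) * (f z)⁻¹` integrable at `0` when
`α < 1`, so every point is joined to `0` at finite cost. Finally, for `z ≠ 0`, `1 / f` is bounded
below on a ball around `z` and `μ` dominates a multiple of the Euclidean norm, so every segment
costs at least a fixed multiple of the change of the distance to `z` truncated at the radius of
that ball; summing along a path from `z` to `w ≠ z` gives a positive lower bound.
-/

open MeasureTheory Metric
open scoped ENNReal NNReal Pointwise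

/-- The `D`-length of the linear segment from `a` to `b`, parametrized by `μ`-length:
`μ(b-a) · ∫_0^1 f(a + t(b-a))⁻¹ dt`. -/
noncomputable def segLen {d : ℕ} (μ f : EuclideanSpace ℝ (Fin d) → ℝ)
    (a b : EuclideanSpace ℝ (Fin d)) : ℝ≥0∞ :=
  ENNReal.ofReal (μ (b - a)) *
    ∫⁻ t in Set.Ioo (0 : ℝ) 1, ENNReal.ofReal ((f (a + t • (b - a)))⁻¹)

/-- `D(z,w)`: the infimum of `D`-lengths of piecewise linear paths from `z` to `w`,
encoded via their finite sequences of vertices. -/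
noncomputable def Dmet {d : ℕ} (μ f : EuclideanSpace ℝ (Fin d) → ℝ)
    (z w : EuclideanSpace ℝ (Fin d)) : ℝ≥0∞ :=
  ⨅ (n : ℕ) (p : Fin (n + 1) → EuclideanSpace ℝ (Fin d)) (_ : p 0 = z)
    (_ : p (Fin.last n) = w),
    ∑ i : Fin n, segLen μ f (p i.castSucc) (p i.succ)

section HomogeneousWeight

variable {E : Type*} [NormedAddCommGroup E] [NormedSpace ℝ E] {α : ℝ} {f f₀ : E → ℝ}

lemma apply_smul_of_eq_norm_rpow_mul (hf0 : f 0 = 0)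
    (hf : ∀ z : E, z ≠ 0 → f z = ‖z‖ ^ α * f₀ (‖z‖⁻¹ • z)) {c : ℝ} (hc : 0 < c) (u : E) :
    f (c • u) = c ^ α * f u := by
  rcases eq_or_ne u 0 with rfl | hu
  · simp [hf0]
  have hcu : c • u ≠ 0 := smul_ne_zero hc.ne' hu
  have hnorm : ‖c • u‖ = c * ‖u‖ := by rw [norm_smul, Real.norm_of_nonneg hc.le]
  have hdir : ‖c • u‖⁻¹ • (c • u) = ‖u‖⁻¹ • u := by
    rw [hnorm, smul_smul]
    congr 1
    field_simp
  rw [hf _ hcu, hf _ hu, hdir, hnorm, Real.mul_rpow hc.le (norm_nonneg u), mul_assoc]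

lemma pos_of_eq_norm_rpow_mul (hpos : ∀ z ∈ sphere (0 : E) 1, 0 < f₀ z)
    (hf : ∀ z : E, z ≠ 0 → f z = ‖z‖ ^ α * f₀ (‖z‖⁻¹ • z)) {z : E} (hz : z ≠ 0) : 0 < f z := by
  rw [hf z hz]
  exact mul_pos (Real.rpow_pos_of_pos (norm_pos_iff.2 hz) _)
    (hpos _ (mem_sphere_zero_iff_norm.2 (norm_smul_inv_norm hz)))

lemma continuousOn_of_eq_norm_rpow_mul (hf₀ : ContinuousOn f₀ (sphere (0 : E) 1))
    (hf : ∀ z : E, z ≠ 0 → f z = ‖z‖ ^ α * f₀ (‖z‖⁻¹ • z)) : ContinuousOn f {0}ᶜ := by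
  have hnorm : ContinuousOn (fun z : E => ‖z‖) {0}ᶜ := continuous_norm.continuousOn
  have hdir : ContinuousOn (fun z : E => ‖z‖⁻¹ • z) {0}ᶜ :=
    (hnorm.inv₀ fun z hz => norm_ne_zero_iff.2 hz).smul continuousOn_id
  refine ContinuousOn.congr ?_ fun z hz => hf z hz
  refine (hnorm.rpow_const fun z hz => Or.inl (norm_ne_zero_iff.2 hz)).mul
    (hf₀.comp hdir fun z hz => mem_sphere_zero_iff_norm.2 (norm_smul_inv_norm hz))

end HomogeneousWeight

lemma exists_pos_le_inv_on_closedBall {E : Type*} [NormedAddCommGroup E] [ProperSpace E]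
    {f : E → ℝ} (hcont : ContinuousOn f {0}ᶜ) (hpos : ∀ u, u ≠ 0 → 0 < f u) {z : E}
    (hz : z ≠ 0) : ∃ ε > 0, ∃ κ > 0, ∀ u ∈ closedBall z ε, κ ≤ (f u)⁻¹ := by
  have hball : closedBall z (‖z‖ / 2) ⊆ {0}ᶜ := fun u hu (h0 : u = 0) => by
    rw [h0, mem_closedBall, dist_zero_left] at hu
    linarith [norm_pos_iff.2 hz]
  obtain ⟨κ, hκ, hκle⟩ := (isCompact_closedBall z (‖z‖ / 2)).exists_forall_le'
    ((hcont.mono hball).inv₀ fun u hu => (hpos u (hball hu)).ne')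
    fun u hu => inv_pos.2 (hpos u (hball hu))
  exact ⟨‖z‖ / 2, by positivity, κ, hκ, hκle⟩

lemma exists_pos_mul_norm_le {E : Type*} [NormedAddCommGroup E] [NormedSpace ℝ E]
    [FiniteDimensional ℝ E] {μ : E → ℝ} (hμ_add : ∀ z w, μ (z + w) ≤ μ z + μ w)
    (hμ_smul : ∀ (c : ℝ) z, μ (c • z) = |c| * μ z) (hμ_eq : ∀ z, μ z = 0 ↔ z = 0) :
    ∃ c > 0, ∀ v, c * ‖v‖ ≤ μ v := by
  let p : Seminorm ℝ E := Seminorm.of μ hμ_add fun c z => by rw [hμ_smul, Real.norm_eq_abs]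
  obtain ⟨c, hc, hcle⟩ := (isCompact_sphere (0 : E) 1).exists_forall_le'
    p.convexOn.locallyLipschitz.continuous.continuousOn fun v hv =>
      (apply_nonneg p v).lt_of_ne' fun h => ne_zero_of_mem_unit_sphere ⟨v, hv⟩ ((hμ_eq v).1 h)
  refine ⟨c, hc, fun v => ?_⟩
  rcases eq_or_ne v 0 with rfl | hv
  · simp [(hμ_eq 0).2 rfl]
  have hunit := hcle _ (mem_sphere_zero_iff_norm.2 (norm_smul_inv_norm (𝕜 := ℝ) hv))
  calc c * ‖v‖ ≤ μ (‖v‖⁻¹ • v) * ‖v‖ := mul_le_mul_of_nonneg_right hunit (norm_nonneg v)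
    _ = μ v := by
      rw [hμ_smul, abs_inv, abs_norm, mul_comm, ← mul_assoc,
        mul_inv_cancel₀ (norm_ne_zero_iff.2 hv), one_mul]

section Dmet

variable {d : ℕ} {μ f : EuclideanSpace ℝ (Fin d) → ℝ} {α : ℝ}

local notation "E" => EuclideanSpace ℝ (Fin d)

lemma Dmet_le_sum {z w : E} (n : ℕ) (p : Fin (n + 1) → E) (h0 : p 0 = z)
    (hn : p (Fin.last n) = w) :
    Dmet μ f z w ≤ ∑ i : Fin n, segLen μ f (p i.castSucc) (p i.succ) :=
  (iInf₂_le n p).trans (iInf₂_le h0 hn)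

lemma Dmet_self (z : E) : Dmet μ f z z = 0 :=
  nonpos_iff_eq_zero.1 <| by simpa using Dmet_le_sum (μ := μ) (f := f) 0 (fun _ => z) rfl rfl

lemma Dmet_le_add_segLen (z w u : E) : Dmet μ f z u ≤ Dmet μ f z w + segLen μ f w u := by
  rw [← tsub_le_iff_right]
  refine le_iInf₂ fun n p => le_iInf₂ fun h0 hn => tsub_le_iff_right.2 ?_
  let q : Fin (n + 2) → E := Fin.snoc p u
  calc Dmet μ f z u ≤ ∑ i : Fin (n + 1), segLen μ f (q i.castSucc) (q i.succ) :=
        Dmet_le_sum (n + 1) q (by simpa [q] using h0) (by simp [q])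
    _ = _ := by
      simp only [q, Fin.sum_univ_castSucc, Fin.succ_castSucc, Fin.snoc_castSucc, Fin.succ_last,
        Fin.snoc_last, hn]

lemma Dmet_le_segLen (a b : E) : Dmet μ f a b ≤ segLen μ f a b :=
  (Dmet_le_add_segLen a a b).trans_eq (by rw [Dmet_self, zero_add])

lemma le_Dmet_of_le_segLen (ρ : E → E → ℝ≥0∞) (hρ_self : ∀ a, ρ a a = 0)
    (hρ_tri : ∀ a b c, ρ a c ≤ ρ a b + ρ b c) (hρ_seg : ∀ a b, ρ a b ≤ segLen μ f a b)
    (z w : E) : ρ z w ≤ Dmet μ f z w := by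
  have hpath : ∀ (n : ℕ) (p : Fin (n + 1) → E),
      ρ (p 0) (p (Fin.last n)) ≤ ∑ i : Fin n, segLen μ f (p i.castSucc) (p i.succ) := by
    intro n
    induction n with
    | zero => intro p; rw [Fin.last_zero, hρ_self]; exact zero_le
    | succ n ih =>
      intro p
      rw [Fin.sum_univ_castSucc]
      refine (hρ_tri _ (p (Fin.last n).castSucc) _).trans (add_le_add ?_ ?_)
      · simp only [Fin.succ_castSucc]
        exact ih (fun i => p i.castSucc)
      · rw [← Fin.succ_last]
        exact hρ_seg _ _
  exact le_iInf₂ fun n p => le_iInf₂ fun h0 hn => h0 ▸ hn ▸ hpath n p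

lemma Dmet_triangle (z w u : E) : Dmet μ f z u ≤ Dmet μ f z w + Dmet μ f w u :=
  tsub_le_iff_left.1 <| le_Dmet_of_le_segLen (fun a b => Dmet μ f z b - Dmet μ f z a)
    (fun _ => tsub_self _) (fun _ _ _ => tsub_le_tsub_add_tsub.trans_eq (add_comm _ _))
    (fun a b => tsub_le_iff_left.2 (Dmet_le_add_segLen z a b)) w u

lemma segLen_symm (hμ_smul : ∀ (c : ℝ) z, μ (c • z) = |c| * μ z) (a b : E) :
    segLen μ f a b = segLen μ f b a := by
  have hμ : μ (b - a) = μ (a - b) := by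
    rw [← neg_sub a b, ← neg_one_smul ℝ (a - b), hμ_smul, abs_neg, abs_one, one_mul]
  have hreflect := (Measure.measurePreserving_sub_left volume (1 : ℝ)).setLIntegral_comp_emb
    (MeasurableEquiv.subLeft (1 : ℝ)).measurableEmbedding
    (fun t => ENNReal.ofReal (f (b + t • (a - b)))⁻¹) (Set.Ioo 0 1)
  rw [Set.image_const_sub_Ioo, sub_zero, sub_self] at hreflect
  rw [segLen, segLen, hμ, ← hreflect]
  congr 1
  refine setLIntegral_congr_fun measurableSet_Ioo fun t _ => ?_
  rw [show b + (1 - t) • (a - b) = a + t • (b - a) by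
    rw [sub_smul, one_smul, smul_sub, smul_sub]; abel]

lemma Dmet_symm (hμ_smul : ∀ (c : ℝ) z, μ (c • z) = |c| * μ z) (z w : E) :
    Dmet μ f z w = Dmet μ f w z := by
  have hle : ∀ z w : E, Dmet μ f w z ≤ Dmet μ f z w :=
    le_Dmet_of_le_segLen (fun a b => Dmet μ f b a) Dmet_self
      (fun a b c => (Dmet_triangle c b a).trans_eq (add_comm _ _))
      (fun a b => (Dmet_le_segLen b a).trans_eq (segLen_symm hμ_smul b a))
  exact le_antisymm (hle w z) (hle z w)

lemma segLen_smul (hμ_smul : ∀ (c : ℝ) z, μ (c • z) = |c| * μ z) {c : ℝ} (hc : 0 < c)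
    (hfc : ∀ u : E, f (c • u) = c ^ α * f u) (a b : E) :
    segLen μ f (c • a) (c • b) = ENNReal.ofReal (c ^ (1 - α)) * segLen μ f a b := by
  have hint : ∀ t : ℝ, ENNReal.ofReal (f (c • a + t • (c • b - c • a)))⁻¹
      = ENNReal.ofReal (c ^ α)⁻¹ * ENNReal.ofReal (f (a + t • (b - a)))⁻¹ := by
    intro t
    rw [← smul_sub, smul_comm t c, ← smul_add, hfc, mul_inv,
      ENNReal.ofReal_mul (inv_nonneg.2 (Real.rpow_nonneg hc.le α))]
  have hc' : ENNReal.ofReal (c ^ (1 - α)) = ENNReal.ofReal c * ENNReal.ofReal (c ^ α)⁻¹ := by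
    rw [Real.rpow_sub hc, Real.rpow_one, div_eq_mul_inv, ENNReal.ofReal_mul hc.le]
  simp only [segLen, hint, lintegral_const_mul' _ _ ENNReal.ofReal_ne_top]
  rw [← smul_sub, hμ_smul, abs_of_pos hc, ENNReal.ofReal_mul hc.le, hc']
  ring

lemma Dmet_smul_le {c : ℝ} {k : ℝ≥0∞} (hk0 : k ≠ 0) (hk : k ≠ ⊤)
    (hseg : ∀ a b : E, segLen μ f (c • a) (c • b) = k * segLen μ f a b) (z w : E) :
    Dmet μ f (c • z) (c • w) ≤ k * Dmet μ f z w := by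
  have h := le_Dmet_of_le_segLen (fun a b => Dmet μ f (c • a) (c • b) / k)
    (fun _ => by rw [Dmet_self, ENNReal.zero_div])
    (fun _ _ _ => by
      rw [← ENNReal.add_div]
      exact ENNReal.div_le_div_right (Dmet_triangle _ _ _) k)
    (fun a b => (ENNReal.div_le_iff hk0 hk).2 <|
      (Dmet_le_segLen _ _).trans_eq (by rw [hseg, mul_comm])) z w
  rwa [ENNReal.div_le_iff hk0 hk, mul_comm] at h

lemma Dmet_smul (hμ_smul : ∀ (c : ℝ) z, μ (c • z) = |c| * μ z)
    (hf_hom : ∀ c : ℝ, 0 < c → ∀ u : E, f (c • u) = c ^ α * f u)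
    {c : ℝ} (hc : 0 < c) (z w : E) :
    Dmet μ f (c • z) (c • w) = ENNReal.ofReal (c ^ (1 - α)) * Dmet μ f z w := by
  have hk : ENNReal.ofReal (c ^ (1 - α)) ≠ 0 := by
    simpa using Real.rpow_pos_of_pos hc (1 - α)
  have hk_inv : ENNReal.ofReal (c⁻¹ ^ (1 - α)) = (ENNReal.ofReal (c ^ (1 - α)))⁻¹ := by
    rw [Real.inv_rpow hc.le, ENNReal.ofReal_inv_of_pos (Real.rpow_pos_of_pos hc _)]
  refine le_antisymm
    (Dmet_smul_le hk ENNReal.ofReal_ne_top (segLen_smul hμ_smul hc (hf_hom c hc)) z w) ?_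
  have h := Dmet_smul_le (by simp [hk_inv]) (by simpa [hk_inv] using hk)
    (segLen_smul hμ_smul (inv_pos.2 hc) (hf_hom c⁻¹ (inv_pos.2 hc))) (c • z) (c • w)
  rw [inv_smul_smul₀ hc.ne', inv_smul_smul₀ hc.ne', hk_inv] at h
  exact (ENNReal.mul_le_iff_le_inv hk ENNReal.ofReal_ne_top).2 h

lemma setOf_Dmet_zero_le_ofReal (hα : α < 1) (hμ_smul : ∀ (c : ℝ) z, μ (c • z) = |c| * μ z)
    (hf_hom : ∀ c : ℝ, 0 < c → ∀ u : E, f (c • u) = c ^ α * f u) {r : ℝ} (hr : 0 < r) :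
    {z : E | Dmet μ f 0 z ≤ ENNReal.ofReal r} =
      (r ^ ((1 : ℝ) / (1 - α))) • {z : E | Dmet μ f 0 z ≤ 1} := by
  set c := r ^ ((1 : ℝ) / (1 - α))
  have hc : 0 < c := Real.rpow_pos_of_pos hr _
  have hcr : c ^ (1 - α) = r := by
    rw [← Real.rpow_mul hr.le, one_div_mul_cancel (sub_pos.2 hα).ne', Real.rpow_one]
  ext v
  have hv : Dmet μ f 0 v = ENNReal.ofReal r * Dmet μ f 0 (c⁻¹ • v) := by
    rw [← hcr, ← Dmet_smul hμ_smul hf_hom hc, smul_zero, smul_inv_smul₀ hc.ne']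
  rw [Set.mem_smul_set_iff_inv_smul_mem₀ hc.ne', Set.mem_ofPred_eq, Set.mem_ofPred_eq, hv]
  nth_rw 2 [← mul_one (ENNReal.ofReal r)]
  exact ENNReal.mul_le_mul_iff_right (by simpa using hr) ENNReal.ofReal_ne_top

lemma segLen_zero_lt_top (hα : α < 1)
    (hf_hom : ∀ c : ℝ, 0 < c → ∀ u : E, f (c • u) = c ^ α * f u) (z : E) :
    segLen μ f 0 z < ⊤ := by
  have hint : ∀ t ∈ Set.Ioo (0 : ℝ) 1, ENNReal.ofReal (f (0 + t • (z - 0)))⁻¹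
      = ENNReal.ofReal (f z)⁻¹ * ENNReal.ofReal (t ^ (-α)) := by
    intro t ht
    rw [zero_add, sub_zero, hf_hom t ht.1, mul_inv, ← Real.rpow_neg ht.1.le, mul_comm,
      ENNReal.ofReal_mul' (Real.rpow_nonneg ht.1.le _)]
  have hrpow : ∫⁻ t in Set.Ioo (0 : ℝ) 1, ENNReal.ofReal (t ^ (-α)) < ⊤ :=
    ((intervalIntegral.integrableOn_Ioo_rpow_iff one_pos).2 (by linarith)).setLIntegral_lt_top
  rw [segLen, setLIntegral_congr_fun measurableSet_Ioo hint,
    lintegral_const_mul' _ _ ENNReal.ofReal_ne_top]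
  exact ENNReal.mul_lt_top ENNReal.ofReal_lt_top (ENNReal.mul_lt_top ENNReal.ofReal_lt_top hrpow)

lemma Dmet_lt_top (hα : α < 1) (hμ_smul : ∀ (c : ℝ) z, μ (c • z) = |c| * μ z)
    (hf_hom : ∀ c : ℝ, 0 < c → ∀ u : E, f (c • u) = c ^ α * f u) (z w : E) :
    Dmet μ f z w < ⊤ :=
  calc Dmet μ f z w ≤ Dmet μ f z 0 + Dmet μ f 0 w := Dmet_triangle z 0 w
    _ ≤ segLen μ f 0 z + segLen μ f 0 w :=
      add_le_add ((Dmet_symm hμ_smul z 0).trans_le (Dmet_le_segLen 0 z)) (Dmet_le_segLen 0 w)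
    _ < ⊤ := ENNReal.add_lt_top.2 ⟨segLen_zero_lt_top hα hf_hom z, segLen_zero_lt_top hα hf_hom w⟩

lemma ofReal_le_segLen_of_forall_Ioo {κ s : ℝ} (hκ : 0 ≤ κ) (hs0 : 0 ≤ s) (hs1 : s ≤ 1)
    {a b : E} (h : ∀ t ∈ Set.Ioo 0 s, κ ≤ (f (a + t • (b - a)))⁻¹) :
    ENNReal.ofReal (μ (b - a) * (κ * s)) ≤ segLen μ f a b := by
  rw [segLen, ENNReal.ofReal_mul' (mul_nonneg hκ hs0)]
  gcongr
  calc ENNReal.ofReal (κ * s) = ∫⁻ _ in Set.Ioo 0 s, ENNReal.ofReal κ := by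
        rw [setLIntegral_const, Real.volume_Ioo, sub_zero, ENNReal.ofReal_mul hκ]
    _ ≤ ∫⁻ t in Set.Ioo 0 s, ENNReal.ofReal (f (a + t • (b - a)))⁻¹ :=
        setLIntegral_mono' measurableSet_Ioo fun t ht => ENNReal.ofReal_le_ofReal (h t ht)
    _ ≤ _ := lintegral_mono_set (Set.Ioo_subset_Ioo_right hs1)

variable {cμ κ ε : ℝ} {z : EuclideanSpace ℝ (Fin d)}

lemma ofReal_sub_min_dist_le_segLen (hκ : 0 ≤ κ)
    (hμ_lb : ∀ v, cμ * ‖v‖ ≤ μ v) (hball : ∀ u ∈ closedBall z ε, κ ≤ (f u)⁻¹)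
    {a b : E} (hab : dist a z ≤ dist b z) :
    ENNReal.ofReal (cμ * κ * (min (dist b z) ε - min (dist a z) ε)) ≤ segLen μ f a b := by
  rcases le_or_gt ε (dist a z) with haε | haε
  · rw [min_eq_right haε, min_eq_right (haε.trans hab), sub_self, mul_zero, ENNReal.ofReal_zero]
    exact zero_le
  rcases eq_or_ne a b with rfl | hne
  · simp
  rw [min_eq_left haε.le]
  set δ := min (dist b z) ε - dist a z
  have hba : 0 < ‖b - a‖ := norm_pos_iff.2 (sub_ne_zero.2 hne.symm)
  have hδ0 : 0 ≤ δ := sub_nonneg.2 (le_min hab haε.le)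
  have hδ1 : δ ≤ ‖b - a‖ := by
    rw [← dist_eq_norm]
    exact (sub_le_sub_right (min_le_left _ _) _).trans
      ((le_abs_self _).trans (abs_dist_sub_le b a z))
  have hs : δ / ‖b - a‖ * ‖b - a‖ = δ := div_mul_cancel₀ δ hba.ne'
  refine le_trans (ENNReal.ofReal_le_ofReal ?_)
    (ofReal_le_segLen_of_forall_Ioo hκ (div_nonneg hδ0 hba.le) ((div_le_one hba).2 hδ1)
      fun t ht => hball _ ?_)
  · calc cμ * κ * δ = cμ * ‖b - a‖ * (κ * (δ / ‖b - a‖)) := by field_simp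
      _ ≤ μ (b - a) * (κ * (δ / ‖b - a‖)) := by gcongr; exact hμ_lb _
  · rw [mem_closedBall]
    calc dist (a + t • (b - a)) z ≤ dist (a + t • (b - a)) a + dist a z := dist_triangle _ _ _
      _ = t * ‖b - a‖ + dist a z := by
        rw [dist_eq_norm, add_sub_cancel_left, norm_smul, Real.norm_of_nonneg ht.1.le]
      _ ≤ δ + dist a z := by
        rw [← hs]; gcongr; exact ht.2.le
      _ ≤ ε := by linarith [min_le_right (dist b z) ε]

lemma edist_min_dist_le_segLen (hμ_smul : ∀ (c : ℝ) z, μ (c • z) = |c| * μ z) (hcμ : 0 ≤ cμ)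
    (hκ : 0 ≤ κ) (hμ_lb : ∀ v, cμ * ‖v‖ ≤ μ v) (hball : ∀ u ∈ closedBall z ε, κ ≤ (f u)⁻¹)
    (a b : E) :
    edist (cμ * κ * min (dist a z) ε) (cμ * κ * min (dist b z) ε) ≤ segLen μ f a b := by
  have hmono : ∀ {a b : E}, dist a z ≤ dist b z →
      cμ * κ * min (dist a z) ε ≤ cμ * κ * min (dist b z) ε := fun h => by gcongr
  rw [edist_dist, Real.dist_eq]
  rcases le_total (dist a z) (dist b z) with hab | hba
  · rw [abs_sub_comm, abs_of_nonneg (sub_nonneg.2 (hmono hab)), ← mul_sub]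
    exact ofReal_sub_min_dist_le_segLen hκ hμ_lb hball hab
  · rw [abs_of_nonneg (sub_nonneg.2 (hmono hba)), ← mul_sub, segLen_symm hμ_smul]
    exact ofReal_sub_min_dist_le_segLen hκ hμ_lb hball hba

lemma Dmet_pos (hμ_smul : ∀ (c : ℝ) z, μ (c • z) = |c| * μ z) (hcμ : 0 < cμ)
    (hμ_lb : ∀ v, cμ * ‖v‖ ≤ μ v) (hf_cont : ContinuousOn f {0}ᶜ)
    (hf_pos : ∀ u, u ≠ 0 → 0 < f u) {z w : E} (hzw : z ≠ w) : 0 < Dmet μ f z w := by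
  wlog hz : z ≠ 0 generalizing z w
  · rw [Dmet_symm hμ_smul]
    exact this hzw.symm fun hw => hz (hw ▸ hzw)
  obtain ⟨ε, hε, κ, hκ, hball⟩ := exists_pos_le_inv_on_closedBall hf_cont hf_pos hz
  let φ : E → ℝ := fun u => cμ * κ * min (dist u z) ε
  have hφ : edist (φ z) (φ w) ≤ Dmet μ f z w :=
    le_Dmet_of_le_segLen (fun a b => edist (φ a) (φ b)) (fun _ => edist_self _)
      (fun _ _ _ => edist_triangle _ _ _)
      (edist_min_dist_le_segLen hμ_smul hcμ.le hκ.le hμ_lb hball) z w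
  refine (edist_pos.2 (ne_of_lt ?_)).trans_le hφ
  have hwz : 0 < dist w z := dist_pos.2 hzw.symm
  simp only [φ, dist_self, min_eq_left hε.le, mul_zero]
  positivity

lemma Dmet_eq_zero_iff (hμ_smul : ∀ (c : ℝ) z, μ (c • z) = |c| * μ z) (hcμ : 0 < cμ)
    (hμ_lb : ∀ v, cμ * ‖v‖ ≤ μ v) (hf_cont : ContinuousOn f {0}ᶜ)
    (hf_pos : ∀ u, u ≠ 0 → 0 < f u) {z w : E} : Dmet μ f z w = 0 ↔ z = w :=
  ⟨fun h => by_contra fun hzw => (Dmet_pos hμ_smul hcμ hμ_lb hf_cont hf_pos hzw).ne' h,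
    fun h => h ▸ Dmet_self z⟩

end Dmet

theorem stmt2_general (d : ℕ) (α : ℝ) (hα : α < 1)
    (f₀ : EuclideanSpace ℝ (Fin d) → ℝ) (K : NNReal)
    (hLip : LipschitzOnWith K f₀ (sphere (0 : EuclideanSpace ℝ (Fin d)) 1))
    (hpos : ∀ z ∈ sphere (0 : EuclideanSpace ℝ (Fin d)) 1, 0 < f₀ z)
    (f : EuclideanSpace ℝ (Fin d) → ℝ) (hf0 : f 0 = 0)
    (hf : ∀ z : EuclideanSpace ℝ (Fin d), z ≠ 0 → f z = ‖z‖ ^ α * f₀ (‖z‖⁻¹ • z))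
    (μ : EuclideanSpace ℝ (Fin d) → ℝ)
    (hμ_add : ∀ z w, μ (z + w) ≤ μ z + μ w)
    (hμ_smul : ∀ (c : ℝ) z, μ (c • z) = |c| * μ z)
    (hμ_eq : ∀ z, μ z = 0 ↔ z = 0) :
    (∀ z w : EuclideanSpace ℝ (Fin d), Dmet μ f z w < ⊤) ∧
    (∀ z w : EuclideanSpace ℝ (Fin d), Dmet μ f z w = Dmet μ f w z) ∧
    (∀ z w u : EuclideanSpace ℝ (Fin d), Dmet μ f z u ≤ Dmet μ f z w + Dmet μ f w u) ∧
    (∀ z w : EuclideanSpace ℝ (Fin d), Dmet μ f z w = 0 ↔ z = w) ∧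
    (∀ r : ℝ, 0 < r →
      {z : EuclideanSpace ℝ (Fin d) | Dmet μ f 0 z ≤ ENNReal.ofReal r} =
        (r ^ ((1 : ℝ) / (1 - α))) •
          {z : EuclideanSpace ℝ (Fin d) | Dmet μ f 0 z ≤ 1}) := by
  obtain ⟨cμ, hcμ, hμ_lb⟩ := exists_pos_mul_norm_le hμ_add hμ_smul hμ_eq
  have hf_hom : ∀ c : ℝ, 0 < c → ∀ u, f (c • u) = c ^ α * f u :=
    fun _ hc => apply_smul_of_eq_norm_rpow_mul hf0 hf hc
  have hf_cont : ContinuousOn f {0}ᶜ := continuousOn_of_eq_norm_rpow_mul hLip.continuousOn hf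
  have hf_pos : ∀ u, u ≠ 0 → 0 < f u := fun _ hu => pos_of_eq_norm_rpow_mul hpos hf hu
  exact ⟨Dmet_lt_top hα hμ_smul hf_hom, Dmet_symm hμ_smul, Dmet_triangle,
    fun _ _ => Dmet_eq_zero_iff hμ_smul hcμ hμ_lb hf_cont hf_pos,
    fun _ hr => setOf_Dmet_zero_le_ofReal hα hμ_smul hf_hom hr⟩

theorem stmt2 (d : ℕ) (hd : 0 < d) (α : ℝ) (hα : α < 1)
    (f₀ : EuclideanSpace ℝ (Fin d) → ℝ) (K : NNReal)
    (hLip : LipschitzOnWith K f₀ (sphere (0 : EuclideanSpace ℝ (Fin d)) 1))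
    (hpos : ∀ z ∈ sphere (0 : EuclideanSpace ℝ (Fin d)) 1, 0 < f₀ z)
    (f : EuclideanSpace ℝ (Fin d) → ℝ) (hf0 : f 0 = 0)
    (hf : ∀ z : EuclideanSpace ℝ (Fin d), z ≠ 0 → f z = ‖z‖ ^ α * f₀ (‖z‖⁻¹ • z))
    (μ : EuclideanSpace ℝ (Fin d) → ℝ)
    (hμ_add : ∀ z w, μ (z + w) ≤ μ z + μ w)
    (hμ_smul : ∀ (c : ℝ) z, μ (c • z) = |c| * μ z)
    (hμ_eq : ∀ z, μ z = 0 ↔ z = 0) :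
    (∀ z w : EuclideanSpace ℝ (Fin d), Dmet μ f z w < ⊤) ∧
    (∀ z w : EuclideanSpace ℝ (Fin d), Dmet μ f z w = Dmet μ f w z) ∧
    (∀ z w u : EuclideanSpace ℝ (Fin d), Dmet μ f z u ≤ Dmet μ f z w + Dmet μ f w u) ∧
    (∀ z w : EuclideanSpace ℝ (Fin d), Dmet μ f z w = 0 ↔ z = w) ∧
    (∀ r : ℝ, 0 < r →
      {z : EuclideanSpace ℝ (Fin d) | Dmet μ f 0 z ≤ ENNReal.ofReal r} =
        (r ^ ((1 : ℝ) / (1 - α))) •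
          {z : EuclideanSpace ℝ (Fin d) | Dmet μ f 0 z ≤ 1}) :=
  stmt2_general d α hα f₀ K hLip hpos f hf0 hf μ hμ_add hμ_smul hμ_eq
end

section
/- For all z, w ∈ ℝ^d∖{0} the following lower bounds hold: (i) if α ∈ [0,∞) and α ≠ 1, then D(z,w) ≥ (|z|^{1−α} − (|z| + ρ̄·μ(w−z))^{1−α}) / (ρ̄ · κ̄ · (α−1)); (ii) if α = 1, then D(z,w) ≥ (ρ̄ κ̄)^{-1} · log((|z| + ρ̄·μ(w−z)) / |z|); (iii) if α < 0 and ρ̄·μ(w−z) ≤ |z|, then D(z,w) ≥ (|z|^{1−α} − (|z| − ρ̄·μ(w−z))^{1−α}) / (ρ̄ · κ̄ · (1−α)). -/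
open MeasureTheory Metric
open scoped ENNReal NNReal Pointwise

/-!
The weight satisfies `f x ≤ κ̄ ‖x‖^α`, and `‖x - z‖ ≤ ρ̄ μ(x - z)` confines `‖x‖` to
`‖z‖ ± ρ̄ μ(x - z)`. Hence `1 / f x ≥ G (μ(x - z))` for the antitone `G s = κ̄⁻¹ (‖z‖ + ρ̄ s)^(-α)`
when `α ≥ 0`, and `G s = κ̄⁻¹ (‖z‖ - ρ̄ s)^(-α)` when `α < 0` (both clamped so as to be antitone on
all of `ℝ`). Along a segment from `a` to `b`, `μ(x - z)` grows at most as fast as the `μ`-length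
travelled, so the `D`-length of the segment dominates `∫ G` over `[μ(a - z), μ(b - z)]`. Summing
over the segments, every path from `z` to `w` has `D`-length at least `∫₀^{μ(w - z)} G`, and these
integrals evaluate to the stated bounds.
-/

open Set

lemma ae_add_smul_ne_zero {E : Type*} [AddCommGroup E] [Module ℝ E] (a : E) {v : E}
    (hv : v ≠ 0) : ∀ᵐ t : ℝ, a + t • v ≠ 0 := by
  have hsub : {t : ℝ | a + t • v = 0}.Subsingleton := fun s hs t ht =>
    smul_left_injective ℝ hv (add_left_cancel (hs.trans ht.symm))
  simpa [ae_iff] using hsub.measure_zero volume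

lemma ofReal_mul_setLIntegral_comp_add_mul (g : ℝ → ℝ≥0∞) {L : ℝ} (hL : 0 < L) (c : ℝ) :
    ENNReal.ofReal L * ∫⁻ t in Ioo 0 1, g (c + L * t) = ∫⁻ s in Ioo c (c + L), g s := by
  have himage : (fun t => c + L * t) '' Ioo 0 1 = Ioo c (c + L) := by
    simpa [add_comm] using image_affine_Ioo hL c 0 1
  rw [← himage, lintegral_image_eq_lintegral_abs_deriv_mul measurableSet_Ioo
    (fun t _ => (((hasDerivAt_id' t).const_mul L).const_add c).hasDerivWithinAt)
    (fun s _ t _ hst => mul_left_cancel₀ hL.ne' (add_left_cancel hst)),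
    ← lintegral_const_mul' _ _ ENNReal.ofReal_ne_top]
  simp [abs_of_pos hL]

section Comparison

variable {d : ℕ} {μ : Seminorm ℝ (EuclideanSpace ℝ (Fin d))}
  {f : EuclideanSpace ℝ (Fin d) → ℝ} {G : ℝ → ℝ} {z : EuclideanSpace ℝ (Fin d)}

lemma setLIntegral_Icc_le_segLen (hG : Antitone G)
    (hGf : ∀ x, x ≠ 0 → G (μ (x - z)) ≤ (f x)⁻¹) (a b : EuclideanSpace ℝ (Fin d)) :
    ∫⁻ s in Icc (μ (a - z)) (μ (b - z)), ENNReal.ofReal (G s) ≤ segLen μ f a b := by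
  have htri : μ (b - z) ≤ μ (a - z) + μ (b - a) := by
    simpa [add_comm] using map_add_le_add μ (b - a) (a - z)
  rcases (apply_nonneg μ (b - a)).eq_or_lt with hL | hL
  · have hnull : volume (Icc (μ (a - z)) (μ (b - z))) = 0 := by
      rw [← hL, add_zero] at htri
      exact measure_mono_null (Icc_subset_Icc_right htri) (by simp)
    simp [setLIntegral_measure_zero _ _ hnull]
  have hv : b - a ≠ 0 := fun h => hL.ne' (by rw [h, map_zero])
  have hpath : ∀ t ∈ Ioo (0 : ℝ) 1, μ (a + t • (b - a) - z) ≤ μ (a - z) + μ (b - a) * t := by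
    intro t ht
    calc μ (a + t • (b - a) - z) = μ ((a - z) + t • (b - a)) := by congr 1; abel
      _ ≤ μ (a - z) + μ (t • (b - a)) := map_add_le_add μ _ _
      _ = μ (a - z) + μ (b - a) * t := by
        rw [map_smul_eq_mul, Real.norm_of_nonneg ht.1.le, mul_comm]
  calc ∫⁻ s in Icc (μ (a - z)) (μ (b - z)), ENNReal.ofReal (G s)
      ≤ ∫⁻ s in Ioo (μ (a - z)) (μ (a - z) + μ (b - a)), ENNReal.ofReal (G s) := by
        rw [setLIntegral_congr Ioo_ae_eq_Icc]
        exact lintegral_mono_set (Icc_subset_Icc_right htri)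
    _ = ENNReal.ofReal (μ (b - a)) *
          ∫⁻ t in Ioo 0 1, ENNReal.ofReal (G (μ (a - z) + μ (b - a) * t)) :=
        (ofReal_mul_setLIntegral_comp_add_mul _ hL _).symm
    _ ≤ segLen μ f a b := by
        refine mul_le_mul_right (lintegral_mono_ae ?_) _
        filter_upwards [ae_restrict_of_ae (ae_add_smul_ne_zero a hv),
          ae_restrict_mem measurableSet_Ioo] with t hne ht
        exact ENNReal.ofReal_le_ofReal ((hG (hpath t ht)).trans (hGf _ hne))

lemma setLIntegral_Icc_le_sum_segLen (hG : Antitone G)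
    (hGf : ∀ x, x ≠ 0 → G (μ (x - z)) ≤ (f x)⁻¹) :
    ∀ {n : ℕ} (p : Fin (n + 1) → EuclideanSpace ℝ (Fin d)),
      ∫⁻ s in Icc (μ (p 0 - z)) (μ (p (Fin.last n) - z)), ENNReal.ofReal (G s) ≤
        ∑ i : Fin n, segLen μ f (p i.castSucc) (p i.succ)
  | 0, p => by simp
  | n + 1, p => by
    calc ∫⁻ s in Icc (μ (p 0 - z)) (μ (p (Fin.last (n + 1)) - z)), ENNReal.ofReal (G s)
        ≤ (∫⁻ s in Icc (μ (p 0 - z)) (μ (p 1 - z)), ENNReal.ofReal (G s)) +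
            ∫⁻ s in Icc (μ (p 1 - z)) (μ (p (Fin.last (n + 1)) - z)), ENNReal.ofReal (G s) :=
          (lintegral_mono_set Icc_subset_Icc_union_Icc).trans (lintegral_union_le _ _ _)
      _ ≤ segLen μ f (p 0) (p 1) + ∑ i : Fin n, segLen μ f (p i.castSucc.succ) (p i.succ.succ) :=
          add_le_add (setLIntegral_Icc_le_segLen hG hGf _ _)
            (setLIntegral_Icc_le_sum_segLen hG hGf (Fin.tail p))
      _ = ∑ i : Fin (n + 1), segLen μ f (p i.castSucc) (p i.succ) :=
          (Fin.sum_univ_succ fun i => segLen μ f (p i.castSucc) (p i.succ)).symm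

lemma setLIntegral_Icc_le_Dmet (hG : Antitone G)
    (hGf : ∀ x, x ≠ 0 → G (μ (x - z)) ≤ (f x)⁻¹) (w : EuclideanSpace ℝ (Fin d)) :
    ∫⁻ s in Icc 0 (μ (w - z)), ENNReal.ofReal (G s) ≤ Dmet μ f z w :=
  le_iInf fun _ => le_iInf fun p => le_iInf fun hp0 => le_iInf fun hpn => by
    simpa [hp0, hpn] using setLIntegral_Icc_le_sum_segLen hG hGf p

lemma ofReal_integral_le_Dmet (hG : Antitone G) (hG0 : ∀ s, 0 ≤ G s)
    (hGf : ∀ x, x ≠ 0 → G (μ (x - z)) ≤ (f x)⁻¹) (w : EuclideanSpace ℝ (Fin d)) :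
    ENNReal.ofReal (∫ s in 0..μ (w - z), G s) ≤ Dmet μ f z w := by
  rw [intervalIntegral.integral_of_le (apply_nonneg μ _),
    ofReal_integral_eq_lintegral_ofReal hG.intervalIntegrable.1 (ae_of_all _ hG0)]
  exact (lintegral_mono_set Ioc_subset_Icc_self).trans (setLIntegral_Icc_le_Dmet hG hGf w)

end Comparison

lemma norm_le_mul_of_mem_upperBounds {E : Type*} [NormedAddCommGroup E] [NormedSpace ℝ E]
    {μ : Seminorm ℝ E} (hμ : ∀ x, μ x = 0 → x = 0) {ρ : ℝ}
    (hρ : ρ ∈ upperBounds {r : ℝ | ∃ z : E, z ≠ 0 ∧ r = ‖z‖ / μ z}) (x : E) :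
    ‖x‖ ≤ ρ * μ x := by
  rcases eq_or_ne x 0 with rfl | hx
  · simp
  have hμx : 0 < μ x := (apply_nonneg μ x).lt_of_ne fun h => hx (hμ x h.symm)
  exact (div_le_iff₀ hμx).1 (hρ ⟨x, hx, rfl⟩)

lemma inv_norm_smul_mem_sphere {E : Type*} [NormedAddCommGroup E] [NormedSpace ℝ E] {x : E}
    (hx : x ≠ 0) : ‖x‖⁻¹ • x ∈ sphere (0 : E) 1 := by
  rw [mem_sphere_zero_iff_norm, norm_smul, norm_inv, norm_norm,
    inv_mul_cancel₀ (norm_ne_zero_iff.2 hx)]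

lemma inv_mul_rpow_neg_le_inv {E : Type*} [NormedAddCommGroup E] [NormedSpace ℝ E]
    {f₀ f : E → ℝ} {α κ : ℝ} (hpos : ∀ u ∈ sphere (0 : E) 1, 0 < f₀ u)
    (hκ : κ ∈ upperBounds (f₀ '' sphere (0 : E) 1))
    (hf : ∀ x, x ≠ 0 → f x = ‖x‖ ^ α * f₀ (‖x‖⁻¹ • x)) {x : E} (hx : x ≠ 0) :
    κ⁻¹ * ‖x‖ ^ (-α) ≤ (f x)⁻¹ := by
  have hu := inv_norm_smul_mem_sphere hx
  rw [hf x hx, mul_inv, ← Real.rpow_neg (norm_nonneg x), mul_comm]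
  exact mul_le_mul_of_nonneg_left (inv_anti₀ (hpos _ hu) (hκ (mem_image_of_mem f₀ hu)))
    (by positivity)

lemma integral_add_mul_rpow_neg {a b M α : ℝ} (hb : b ≠ 0)
    (h : α < 1 ∨ α ≠ 1 ∧ (0 : ℝ) ∉ uIcc a (a + b * M)) :
    ∫ s in 0..M, (a + b * s) ^ (-α) = (a ^ (1 - α) - (a + b * M) ^ (1 - α)) / (b * (α - 1)) := by
  have hα : α - 1 ≠ 0 := by rcases h with h | h <;> [linarith; exact sub_ne_zero.2 h.1]
  have hα' : 1 - α ≠ 0 := fun h => hα (by linarith)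
  have hr : -1 < -α ∨ -α ≠ -1 ∧ (0 : ℝ) ∉ uIcc (a + b * 0) (a + b * M) := by
    rw [mul_zero, add_zero]
    rcases h with h | ⟨h1, h2⟩
    exacts [Or.inl (by linarith), Or.inr ⟨by rwa [ne_eq, neg_inj], h2⟩]
  rw [intervalIntegral.integral_comp_add_mul (fun u => u ^ (-α)) hb, integral_rpow hr,
    neg_add_eq_sub, mul_zero, add_zero, smul_eq_mul]
  field_simp
  ring

lemma integral_add_mul_inv {a b M : ℝ} (hb : b ≠ 0) (h : (0 : ℝ) ∉ uIcc a (a + b * M)) :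
    ∫ s in 0..M, (a + b * s)⁻¹ = b⁻¹ * Real.log ((a + b * M) / a) := by
  rw [intervalIntegral.integral_comp_add_mul (fun u => u⁻¹) hb, mul_zero, add_zero,
    integral_inv h, smul_eq_mul]

section Radial

variable {d : ℕ} {μ : Seminorm ℝ (EuclideanSpace ℝ (Fin d))}
  {f : EuclideanSpace ℝ (Fin d) → ℝ} {α ρ κ : ℝ} {z : EuclideanSpace ℝ (Fin d)}

lemma ofReal_mul_integral_add_rpow_le_Dmet (hnorm : ∀ x, ‖x‖ ≤ ρ * μ x) (hρ : 0 ≤ ρ)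
    (hκ : 0 ≤ κ) (hf : ∀ x, x ≠ 0 → κ⁻¹ * ‖x‖ ^ (-α) ≤ (f x)⁻¹) (hz : z ≠ 0) (hα : 0 ≤ α)
    (w : EuclideanSpace ℝ (Fin d)) :
    ENNReal.ofReal (κ⁻¹ * ∫ s in 0..μ (w - z), (‖z‖ + ρ * s) ^ (-α)) ≤ Dmet μ f z w := by
  have hbase : ∀ s, 0 < ‖z‖ + ρ * max s 0 := fun s => by positivity
  have hG : Antitone fun s => κ⁻¹ * (‖z‖ + ρ * max s 0) ^ (-α) := fun s t hst => by
    refine mul_le_mul_of_nonneg_left ?_ (inv_nonneg.2 hκ)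
    exact Real.rpow_le_rpow_of_nonpos (hbase s) (by gcongr) (neg_nonpos.2 hα)
  have hGf : ∀ x, x ≠ 0 → κ⁻¹ * (‖z‖ + ρ * max (μ (x - z)) 0) ^ (-α) ≤ (f x)⁻¹ := by
    intro x hx
    have hx_le : ‖x‖ ≤ ‖z‖ + ρ * max (μ (x - z)) 0 := by
      rw [max_eq_left (apply_nonneg μ _)]
      linarith [norm_le_norm_add_norm_sub' x z, hnorm (x - z)]
    refine le_trans (mul_le_mul_of_nonneg_left ?_ (inv_nonneg.2 hκ)) (hf x hx)
    exact Real.rpow_le_rpow_of_nonpos (norm_pos_iff.2 hx) hx_le (neg_nonpos.2 hα)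
  convert ofReal_integral_le_Dmet hG (fun s => by positivity) hGf w using 2
  rw [← intervalIntegral.integral_const_mul]
  refine intervalIntegral.integral_congr fun s hs => ?_
  rw [uIcc_of_le (apply_nonneg μ _)] at hs
  simp only [max_eq_left hs.1]

lemma ofReal_mul_integral_sub_rpow_le_Dmet (hnorm : ∀ x, ‖x‖ ≤ ρ * μ x) (hρ : 0 ≤ ρ)
    (hκ : 0 ≤ κ) (hf : ∀ x, x ≠ 0 → κ⁻¹ * ‖x‖ ^ (-α) ≤ (f x)⁻¹) (hα : α ≤ 0)
    (w : EuclideanSpace ℝ (Fin d)) (hw : ρ * μ (w - z) ≤ ‖z‖) :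
    ENNReal.ofReal (κ⁻¹ * ∫ s in 0..μ (w - z), (‖z‖ - ρ * s) ^ (-α)) ≤ Dmet μ f z w := by
  have hG : Antitone fun s => κ⁻¹ * (max (‖z‖ - ρ * s) 0) ^ (-α) := fun s t hst => by
    refine mul_le_mul_of_nonneg_left ?_ (inv_nonneg.2 hκ)
    exact Real.rpow_le_rpow (le_max_right _ _) (by gcongr) (neg_nonneg.2 hα)
  have hGf : ∀ x, x ≠ 0 → κ⁻¹ * (max (‖z‖ - ρ * μ (x - z)) 0) ^ (-α) ≤ (f x)⁻¹ := by
    intro x hx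
    have hx_ge : max (‖z‖ - ρ * μ (x - z)) 0 ≤ ‖x‖ := by
      refine max_le ?_ (norm_nonneg x)
      linarith [norm_le_norm_add_norm_sub x z, hnorm (x - z)]
    refine le_trans (mul_le_mul_of_nonneg_left ?_ (inv_nonneg.2 hκ)) (hf x hx)
    exact Real.rpow_le_rpow (le_max_right _ _) hx_ge (neg_nonneg.2 hα)
  convert ofReal_integral_le_Dmet hG (fun s => by positivity) hGf w using 2
  rw [← intervalIntegral.integral_const_mul]
  refine intervalIntegral.integral_congr fun s hs => ?_
  rw [uIcc_of_le (apply_nonneg μ _)] at hs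
  have hs_le : 0 ≤ ‖z‖ - ρ * s := by nlinarith [hs.2]
  simp only [max_eq_left hs_le]

end Radial

theorem stmt4_general (d : ℕ) (α : ℝ)
    (f₀ : EuclideanSpace ℝ (Fin d) → ℝ)
    (hpos : ∀ z ∈ sphere (0 : EuclideanSpace ℝ (Fin d)) 1, 0 < f₀ z)
    (f : EuclideanSpace ℝ (Fin d) → ℝ)
    (hf : ∀ z : EuclideanSpace ℝ (Fin d), z ≠ 0 → f z = ‖z‖ ^ α * f₀ (‖z‖⁻¹ • z))
    (μ : EuclideanSpace ℝ (Fin d) → ℝ)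
    (hμ_add : ∀ z w, μ (z + w) ≤ μ z + μ w)
    (hμ_smul : ∀ (c : ℝ) z, μ (c • z) = |c| * μ z)
    (hμ_eq : ∀ z, μ z = 0 ↔ z = 0)
    (ρ : ℝ) (hρ : IsLUB {r : ℝ | ∃ z : EuclideanSpace ℝ (Fin d), z ≠ 0 ∧ r = ‖z‖ / μ z} ρ)
    (κ : ℝ) (hκ : IsLUB (f₀ '' sphere (0 : EuclideanSpace ℝ (Fin d)) 1) κ)
    (z w : EuclideanSpace ℝ (Fin d)) (hz : z ≠ 0) :
    (0 ≤ α → α ≠ 1 →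
      ENNReal.ofReal ((‖z‖ ^ (1 - α) - (‖z‖ + ρ * μ (w - z)) ^ (1 - α)) / (ρ * κ * (α - 1)))
        ≤ Dmet μ f z w) ∧
    (α = 1 →
      ENNReal.ofReal ((ρ * κ)⁻¹ * Real.log ((‖z‖ + ρ * μ (w - z)) / ‖z‖))
        ≤ Dmet μ f z w) ∧
    (α < 0 → ρ * μ (w - z) ≤ ‖z‖ →
      ENNReal.ofReal ((‖z‖ ^ (1 - α) - (‖z‖ - ρ * μ (w - z)) ^ (1 - α)) / (ρ * κ * (1 - α)))
        ≤ Dmet μ f z w) := by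
  obtain ⟨μ, rfl⟩ : ∃ μ' : Seminorm ℝ (EuclideanSpace ℝ (Fin d)), ⇑μ' = μ :=
    ⟨Seminorm.of μ hμ_add fun c x => by rw [Real.norm_eq_abs, hμ_smul], rfl⟩
  have hnorm : ∀ x, ‖x‖ ≤ ρ * μ x :=
    norm_le_mul_of_mem_upperBounds (fun x => (hμ_eq x).1) hρ.1
  have hz' : 0 < ‖z‖ := norm_pos_iff.2 hz
  have hρ0 : 0 < ρ := pos_of_mul_pos_left (hz'.trans_le (hnorm z)) (apply_nonneg μ z)
  have hu := inv_norm_smul_mem_sphere hz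
  have hκ0 : 0 < κ := (hpos _ hu).trans_le (hκ.1 (mem_image_of_mem f₀ hu))
  have hfinv : ∀ x, x ≠ 0 → κ⁻¹ * ‖x‖ ^ (-α) ≤ (f x)⁻¹ :=
    fun x hx => inv_mul_rpow_neg_le_inv hpos hκ.1 hf hx
  have h0 : (0 : ℝ) ∉ uIcc ‖z‖ (‖z‖ + ρ * μ (w - z)) := by
    rw [uIcc_of_le (le_add_of_nonneg_right (mul_nonneg hρ0.le (apply_nonneg μ _)))]
    exact fun h => hz'.not_ge h.1
  refine ⟨fun hα hα1 => ?_, fun hα => ?_, fun hα hw => ?_⟩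
  · convert ofReal_mul_integral_add_rpow_le_Dmet hnorm hρ0.le hκ0.le hfinv hz hα w
      using 2
    rw [integral_add_mul_rpow_neg hρ0.ne' (Or.inr ⟨hα1, h0⟩), inv_mul_eq_div, div_div,
      mul_right_comm]
  · subst hα
    convert ofReal_mul_integral_add_rpow_le_Dmet hnorm hρ0.le hκ0.le hfinv hz zero_le_one w
      using 2
    simp only [Real.rpow_neg_one]
    rw [integral_add_mul_inv hρ0.ne' h0, mul_inv, mul_assoc, mul_left_comm]
  · have hint := integral_add_mul_rpow_neg (a := ‖z‖) (M := μ (w - z))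
      (neg_ne_zero.2 hρ0.ne') (Or.inl (hα.trans zero_lt_one))
    simp only [neg_mul, ← sub_eq_add_neg] at hint
    convert ofReal_mul_integral_sub_rpow_le_Dmet hnorm hρ0.le hκ0.le hfinv hα.le w hw using 2
    rw [hint, inv_mul_eq_div, div_div, mul_right_comm, ← neg_sub α, mul_neg]

theorem stmt4 (d : ℕ) (hd : 0 < d) (α : ℝ)
    (f₀ : EuclideanSpace ℝ (Fin d) → ℝ) (K : NNReal)
    (hLip : LipschitzOnWith K f₀ (sphere (0 : EuclideanSpace ℝ (Fin d)) 1))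
    (hpos : ∀ z ∈ sphere (0 : EuclideanSpace ℝ (Fin d)) 1, 0 < f₀ z)
    (f : EuclideanSpace ℝ (Fin d) → ℝ) (hf0 : f 0 = 0)
    (hf : ∀ z : EuclideanSpace ℝ (Fin d), z ≠ 0 → f z = ‖z‖ ^ α * f₀ (‖z‖⁻¹ • z))
    (μ : EuclideanSpace ℝ (Fin d) → ℝ)
    (hμ_add : ∀ z w, μ (z + w) ≤ μ z + μ w)
    (hμ_smul : ∀ (c : ℝ) z, μ (c • z) = |c| * μ z)
    (hμ_eq : ∀ z, μ z = 0 ↔ z = 0)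
    (ρ : ℝ) (hρ : IsLUB {r : ℝ | ∃ z : EuclideanSpace ℝ (Fin d), z ≠ 0 ∧ r = ‖z‖ / μ z} ρ)
    (κ : ℝ) (hκ : IsLUB (f₀ '' sphere (0 : EuclideanSpace ℝ (Fin d)) 1) κ)
    (z w : EuclideanSpace ℝ (Fin d)) (hz : z ≠ 0) (hw : w ≠ 0) :
    (0 ≤ α → α ≠ 1 →
      ENNReal.ofReal ((‖z‖ ^ (1 - α) - (‖z‖ + ρ * μ (w - z)) ^ (1 - α)) / (ρ * κ * (α - 1)))
        ≤ Dmet μ f z w) ∧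
    (α = 1 →
      ENNReal.ofReal ((ρ * κ)⁻¹ * Real.log ((‖z‖ + ρ * μ (w - z)) / ‖z‖))
        ≤ Dmet μ f z w) ∧
    (α < 0 → ρ * μ (w - z) ≤ ‖z‖ →
      ENNReal.ofReal ((‖z‖ ^ (1 - α) - (‖z‖ - ρ * μ (w - z)) ^ (1 - α)) / (ρ * κ * (1 - α)))
        ≤ Dmet μ f z w) :=
  stmt4_general d α f₀ hpos f hf μ hμ_add hμ_smul hμ_eq ρ hρ κ hκ z w hz
end

section
/- Suppose α < 1. There exists a constant c > 1, depending only on μ and f, such that for every r > 0: the closed Euclidean ball of radius c^{-1} r^{1/(1−α)} centered at 0 is contained in {z ∈ ℝ^d : D(0,z) ≤ r}, which in turn is contained in the closed Euclidean ball of radius c · r^{1/(1−α)} centered at 0. -/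
open MeasureTheory Metric
open scoped ENNReal NNReal Pointwise

/-!
The norm `μ` is comparable to the Euclidean norm (a seminorm on a finite-dimensional space is
continuous, and the unit sphere is compact), and likewise `f z` is comparable to `‖z‖ ^ α`.
The straight segment from `0` to `z` therefore has `D`-length `≲ ‖z‖ ^ (1 - α)`, because
`∫₀¹ t ^ (-α) dt < ∞`. Conversely, a segment from `a` to `b` with `‖a‖ ≤ ‖b‖` spends its last
quarter between distances `‖b‖ / 2` and `‖b‖` from the origin, so its `D`-length is
`≳ (‖b‖ - ‖a‖) ‖b‖ ^ (-α) ≳ ‖b‖ ^ (1 - α) - ‖a‖ ^ (1 - α)`; along a piecewise linear path these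
bounds telescope to `D(0, z) ≳ ‖z‖ ^ (1 - α)`. Taking `(1 - α)`-th roots gives the two balls.
-/

open Set

lemma Fin.sum_succ_sub_castSucc {M : Type*} [AddCommGroup M] {n : ℕ} (g : Fin (n + 1) → M) :
    ∑ i : Fin n, (g i.succ - g i.castSucc) = g (Fin.last n) - g 0 := by
  cases n with
  | zero => simp
  | succ n => simpa [← Fin.top_eq_last, Fin.succ_last] using Fin.sum_Iic_sub (Fin.last n) g

lemma rpow_sub_rpow_le {x y β : ℝ} (hx : 0 ≤ x) (hxy : x ≤ y) (hβ : 0 < β) :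
    y ^ β - x ^ β ≤ max 1 β * (y - x) * y ^ (β - 1) := by
  obtain rfl | hy := (hx.trans hxy).eq_or_lt
  · simp [le_antisymm hxy hx]
  have hyβ : y ^ β = y * y ^ (β - 1) := by
    rw [← Real.rpow_one_add' hy.le (by linarith), add_sub_cancel]
  rcases le_total β 1 with hβ1 | hβ1
  · suffices x * y ^ (β - 1) ≤ x ^ β by
      rw [max_eq_left hβ1]; nlinarith
    obtain rfl | hx := hx.eq_or_lt
    · simp [Real.zero_rpow hβ.ne']
    calc x * y ^ (β - 1) ≤ x * x ^ (β - 1) :=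
          mul_le_mul_of_nonneg_left (Real.rpow_le_rpow_of_nonpos hx hxy (by linarith)) hx.le
      _ = x ^ β := by rw [← Real.rpow_one_add' hx.le (by linarith), add_sub_cancel]
  · -- Bernoulli's inequality for `(x / y) ^ β`
    have hbern := one_add_mul_self_le_rpow_one_add (s := x / y - 1)
      (by linarith [div_nonneg hx hy.le]) hβ1
    rw [add_sub_cancel, Real.div_rpow hx hy.le, le_div_iff₀ (by positivity)] at hbern
    have : (1 + β * (x / y - 1)) * y ^ β = y ^ β - β * (y - x) * y ^ (β - 1) := by
      rw [hyβ]; field_simp; ring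
    rw [max_eq_right hβ1]
    linarith

lemma min_one_two_rpow_mul_rpow_neg_le {u y p : ℝ} (hy : 0 < y) (hu : u ∈ Icc (y / 2) y) :
    min 1 (2 ^ p) * y ^ (-p) ≤ u ^ (-p) := by
  have hu₀ : 0 < u := by linarith [hu.1]
  rcases le_total 0 p with hp | hp
  · calc min 1 (2 ^ p) * y ^ (-p) ≤ 1 * y ^ (-p) := by gcongr; exact min_le_left _ _
      _ ≤ u ^ (-p) := by
          rw [one_mul]; exact Real.rpow_le_rpow_of_nonpos hu₀ hu.2 (by linarith)
  · calc min 1 (2 ^ p) * y ^ (-p) ≤ 2 ^ p * y ^ (-p) := by gcongr; exact min_le_right _ _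
      _ = (y / 2) ^ (-p) := by
          rw [Real.div_rpow hy.le zero_le_two, Real.rpow_neg zero_le_two, div_inv_eq_mul, mul_comm]
      _ ≤ u ^ (-p) := Real.rpow_le_rpow (by positivity) hu.1 (by linarith)

lemma norm_add_smul_sub_mem_Icc {E : Type*} [SeminormedAddCommGroup E] [NormedSpace ℝ E]
    {a b : E} (hab : ‖a‖ ≤ ‖b‖) {t : ℝ} (ht : t ∈ Icc (3 / 4 : ℝ) 1) :
    ‖a + t • (b - a)‖ ∈ Icc (‖b‖ / 2) ‖b‖ := by
  have hw : a + t • (b - a) = (1 - t) • a + t • b := by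
    rw [smul_sub, sub_smul, one_smul]; abel
  have h₁ : 0 ≤ 1 - t := by linarith [ht.2]
  have h₂ : 0 ≤ t := by linarith [ht.1]
  rw [hw]
  constructor
  · have := norm_sub_norm_le (t • b) (-((1 - t) • a))
    rw [sub_neg_eq_add, add_comm, norm_neg, norm_smul, norm_smul, Real.norm_of_nonneg h₁,
      Real.norm_of_nonneg h₂] at this
    nlinarith [mul_le_mul_of_nonneg_left hab h₁, mul_nonneg (sub_nonneg.2 ht.1) (norm_nonneg b)]
  · calc ‖(1 - t) • a + t • b‖ ≤ (1 - t) * ‖a‖ + t * ‖b‖ := by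
          refine (norm_add_le _ _).trans_eq ?_
          rw [norm_smul, norm_smul, Real.norm_of_nonneg h₁, Real.norm_of_nonneg h₂]
      _ ≤ ‖b‖ := by nlinarith

lemma lintegral_Ioo_zero_one_rpow {p : ℝ} (hp : -1 < p) :
    ∫⁻ t in Ioo (0 : ℝ) 1, ENNReal.ofReal (t ^ p) = ENNReal.ofReal (1 / (p + 1)) := by
  rw [← ofReal_integral_eq_lintegral_ofReal]
  · rw [← integral_Ioc_eq_integral_Ioo, ← intervalIntegral.integral_of_le zero_le_one,
      integral_rpow (Or.inl hp), Real.one_rpow, Real.zero_rpow (by linarith), sub_zero]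
  · exact ((intervalIntegrable_iff_integrableOn_Ioc_of_le zero_le_one).1
      (intervalIntegral.intervalIntegrable_rpow' hp)).mono_set Ioo_subset_Ioc_self
  · exact (ae_restrict_iff' measurableSet_Ioo).2
      (Filter.Eventually.of_forall fun t ht => Real.rpow_nonneg ht.1.le _)

lemma IsCompact.exists_pos_bounds_of_pos {X : Type*} [TopologicalSpace X] {s : Set X}
    (hs : IsCompact s) {g : X → ℝ} (hg : ContinuousOn g s) (hpos : ∀ x ∈ s, 0 < g x) :
    ∃ m M : ℝ, 0 < m ∧ 0 < M ∧ ∀ x ∈ s, m ≤ g x ∧ g x ≤ M := by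
  obtain ⟨m, hm, hmg⟩ := hs.exists_forall_le' hg hpos
  obtain ⟨M, hM, hgM⟩ := (hs.image_of_continuousOn hg).isBounded.exists_pos_norm_le
  exact ⟨m, M, hm, hM, fun x hx =>
    ⟨hmg x hx, (le_abs_self _).trans (hgM _ (mem_image_of_mem g hx))⟩⟩

section FiniteDimensional

variable {E : Type*} [NormedAddCommGroup E] [NormedSpace ℝ E] [FiniteDimensional ℝ E]

lemma Seminorm.exists_mul_norm_le_le_mul_norm (p : Seminorm ℝ E) (hp : ∀ z, p z = 0 → z = 0) :
    ∃ a b : ℝ, 0 < a ∧ ∀ z, a * ‖z‖ ≤ p z ∧ p z ≤ b * ‖z‖ := by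
  have hcont : ContinuousOn p (sphere (0 : E) 1) :=
    (p.convexOn.continuousOn isOpen_univ).mono (subset_univ _)
  obtain ⟨a, b, ha, -, hab⟩ := (isCompact_sphere (0 : E) 1).exists_pos_bounds_of_pos hcont
    fun u hu => (apply_nonneg p u).lt_of_ne' fun h => ne_zero_of_mem_unit_sphere ⟨u, hu⟩ (hp u h)
  refine ⟨a, b, ha, fun z => ?_⟩
  obtain rfl | hz := eq_or_ne z 0
  · simp
  have hz' : ‖z‖⁻¹ • z ∈ sphere (0 : E) 1 := mem_sphere_zero_iff_norm.2 (norm_smul_inv_norm hz)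
  have hscale : p z = ‖z‖ * p (‖z‖⁻¹ • z) := by
    rw [map_smul_eq_mul, norm_inv, norm_norm, mul_inv_cancel_left₀ (norm_ne_zero_iff.2 hz)]
  have := hab _ hz'
  constructor <;> nlinarith [norm_nonneg z]

end FiniteDimensional

lemma exists_mul_rpow_le_le_mul_rpow {E : Type*} [NormedAddCommGroup E] [NormedSpace ℝ E]
    [ProperSpace E] {f₀ f : E → ℝ} {α : ℝ} (hf₀ : ContinuousOn f₀ (sphere 0 1))
    (hpos : ∀ u ∈ sphere (0 : E) 1, 0 < f₀ u)
    (hf : ∀ z : E, z ≠ 0 → f z = ‖z‖ ^ α * f₀ (‖z‖⁻¹ • z)) :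
    ∃ m M : ℝ, 0 < m ∧ 0 < M ∧ ∀ z : E, z ≠ 0 → m * ‖z‖ ^ α ≤ f z ∧ f z ≤ M * ‖z‖ ^ α := by
  obtain ⟨m, M, hm, hM, hmM⟩ := (isCompact_sphere (0 : E) 1).exists_pos_bounds_of_pos hf₀ hpos
  refine ⟨m, M, hm, hM, fun z hz => ?_⟩
  have hz' : ‖z‖⁻¹ • z ∈ sphere (0 : E) 1 := mem_sphere_zero_iff_norm.2 (norm_smul_inv_norm hz)
  have := hmM _ hz'
  have hzα : 0 < ‖z‖ ^ α := Real.rpow_pos_of_pos (norm_pos_iff.2 hz) α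
  rw [hf z hz]
  constructor <;> nlinarith

lemma exists_closedBall_subset_and_subset_closedBall {E : Type*} [SeminormedAddCommGroup E]
    (Φ : E → ℝ≥0∞) {β C₁ C₂ : ℝ} (hβ : 0 < β) (hC₂ : 0 < C₂)
    (hup : ∀ z, Φ z ≤ ENNReal.ofReal (C₁ * ‖z‖ ^ β))
    (hlow : ∀ z, ENNReal.ofReal (C₂ * ‖z‖ ^ β) ≤ Φ z) :
    ∃ c : ℝ, 1 < c ∧ ∀ r : ℝ, 0 < r →
      closedBall (0 : E) (c⁻¹ * r ^ (1 / β)) ⊆ {z | Φ z ≤ ENNReal.ofReal r} ∧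
      {z | Φ z ≤ ENNReal.ofReal r} ⊆ closedBall (0 : E) (c * r ^ (1 / β)) := by
  set K := max 2 (max C₁ C₂⁻¹)
  have hK : 1 < K := lt_of_lt_of_le one_lt_two (le_max_left _ _)
  have hC₁K : C₁ ≤ K := (le_max_left _ _).trans (le_max_right _ _)
  have hC₂K : C₂⁻¹ ≤ K := (le_max_right _ _).trans (le_max_right _ _)
  have hK₀ : 0 < K := one_pos.trans hK
  refine ⟨K ^ (1 / β), Real.one_lt_rpow hK (by positivity),
    fun r hr => ⟨fun z hz => ?_, fun z hz => ?_⟩⟩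
  · rw [mem_closedBall_zero_iff, ← Real.inv_rpow hK₀.le,
      ← Real.mul_rpow (by positivity) hr.le, one_div,
      Real.le_rpow_inv_iff_of_pos (norm_nonneg z) (by positivity) hβ] at hz
    refine (hup z).trans (ENNReal.ofReal_le_ofReal ?_)
    calc C₁ * ‖z‖ ^ β ≤ K * (K⁻¹ * r) := by gcongr
      _ = r := by field_simp
  · have hzr : C₂ * ‖z‖ ^ β ≤ r := (ENNReal.ofReal_le_ofReal_iff hr.le).1 ((hlow z).trans hz)
    rw [mem_closedBall_zero_iff, ← Real.mul_rpow hK₀.le hr.le, one_div,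
      Real.le_rpow_inv_iff_of_pos (norm_nonneg z) (by positivity) hβ]
    calc ‖z‖ ^ β = C₂⁻¹ * (C₂ * ‖z‖ ^ β) := by field_simp
      _ ≤ K * r := by gcongr

section Segments

variable {d : ℕ} {μ f : EuclideanSpace ℝ (Fin d) → ℝ}

lemma Dmet_le_segLen_s5 (z w : EuclideanSpace ℝ (Fin d)) : Dmet μ f z w ≤ segLen μ f z w := by
  have h : Dmet μ f z w ≤ ∑ i : Fin 1, segLen μ f (![z, w] i.castSucc) (![z, w] i.succ) :=
    iInf_le_of_le 1 <| iInf_le_of_le ![z, w] <| iInf_le_of_le rfl <| iInf_le_of_le rfl le_rfl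
  simpa using h

lemma ofReal_sub_le_Dmet {g : EuclideanSpace ℝ (Fin d) → ℝ}
    (hg : ∀ a b, ENNReal.ofReal (g b - g a) ≤ segLen μ f a b) (z w : EuclideanSpace ℝ (Fin d)) :
    ENNReal.ofReal (g w - g z) ≤ Dmet μ f z w := by
  refine le_iInf fun n => le_iInf fun p => le_iInf fun hz => le_iInf fun hw => ?_
  calc ENNReal.ofReal (g w - g z)
      = ENNReal.ofReal (∑ i : Fin n, (g (p i.succ) - g (p i.castSucc))) := by
        rw [Fin.sum_succ_sub_castSucc fun i => g (p i), hz, hw]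
    _ ≤ ∑ i : Fin n, ENNReal.ofReal (g (p i.succ) - g (p i.castSucc)) :=
        Finset.le_sum_of_subadditive _ ENNReal.ofReal_zero.le (fun _ _ => ENNReal.ofReal_add_le) _ _
    _ ≤ ∑ i : Fin n, segLen μ f (p i.castSucc) (p i.succ) :=
        Finset.sum_le_sum fun i _ => hg _ _

lemma segLen_zero_le {α b m : ℝ} (hα : α < 1) (hm : 0 < m)
    (hμ : ∀ z, μ z ≤ b * ‖z‖) (hf : ∀ z, z ≠ 0 → m * ‖z‖ ^ α ≤ f z)
    (z : EuclideanSpace ℝ (Fin d)) :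
    segLen μ f 0 z ≤ ENNReal.ofReal (b / (m * (1 - α)) * ‖z‖ ^ (1 - α)) := by
  unfold segLen
  obtain rfl | hz := eq_or_ne z 0
  · simp [ENNReal.ofReal_of_nonpos (by simpa using hμ 0)]
  have hz₀ : 0 < ‖z‖ := norm_pos_iff.2 hz
  have hinv : ∀ t ∈ Ioo (0 : ℝ) 1, (f (0 + t • (z - 0)))⁻¹ ≤ m⁻¹ * ‖z‖ ^ (-α) * t ^ (-α) := by
    intro t ht
    have htz : t • z ≠ 0 := smul_ne_zero ht.1.ne' hz
    have hnorm : ‖t • z‖ ^ α = t ^ α * ‖z‖ ^ α := by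
      rw [norm_smul, Real.norm_of_nonneg ht.1.le, Real.mul_rpow ht.1.le hz₀.le]
    have hle := hf _ htz
    rw [hnorm] at hle
    rw [zero_add, sub_zero, Real.rpow_neg hz₀.le, Real.rpow_neg ht.1.le, ← mul_inv, ← mul_inv]
    exact inv_anti₀ (mul_pos (mul_pos hm (Real.rpow_pos_of_pos hz₀ α))
      (Real.rpow_pos_of_pos ht.1 α)) (by linarith)
  have hint : ∫⁻ t in Ioo (0 : ℝ) 1, ENNReal.ofReal ((f (0 + t • (z - 0)))⁻¹)
      ≤ ENNReal.ofReal (m⁻¹ * ‖z‖ ^ (-α)) * ENNReal.ofReal (1 / (1 - α)) := by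
    calc ∫⁻ t in Ioo (0 : ℝ) 1, ENNReal.ofReal ((f (0 + t • (z - 0)))⁻¹)
        ≤ ∫⁻ t in Ioo (0 : ℝ) 1, ENNReal.ofReal (m⁻¹ * ‖z‖ ^ (-α)) * ENNReal.ofReal (t ^ (-α)) :=
          setLIntegral_mono' measurableSet_Ioo fun t ht => by
            rw [← ENNReal.ofReal_mul (by positivity)]
            exact ENNReal.ofReal_le_ofReal (hinv t ht)
      _ = _ := by
          rw [lintegral_const_mul' _ _ ENNReal.ofReal_ne_top,
            lintegral_Ioo_zero_one_rpow (by linarith), neg_add_eq_sub]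
  calc ENNReal.ofReal (μ (z - 0)) * ∫⁻ t in Ioo (0 : ℝ) 1, ENNReal.ofReal ((f (0 + t • (z - 0)))⁻¹)
      ≤ ENNReal.ofReal (b * ‖z‖) *
          (ENNReal.ofReal (m⁻¹ * ‖z‖ ^ (-α)) * ENNReal.ofReal (1 / (1 - α))) := by
        gcongr
        simpa using hμ z
    _ = ENNReal.ofReal (b / (m * (1 - α)) * ‖z‖ ^ (1 - α)) := by
        rw [← ENNReal.ofReal_mul (by positivity), ← ENNReal.ofReal_mul' (by positivity)]
        congr 1
        rw [sub_eq_add_neg, Real.rpow_add hz₀, Real.rpow_one]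
        field_simp

lemma ofReal_mul_le_segLen {a b : EuclideanSpace ℝ (Fin d)} {c : ℝ}
    (hc : ∀ t ∈ Ioo (3 / 4 : ℝ) 1, c ≤ (f (a + t • (b - a)))⁻¹) :
    ENNReal.ofReal (μ (b - a)) * ENNReal.ofReal (c / 4) ≤ segLen μ f a b := by
  unfold segLen
  gcongr
  calc ENNReal.ofReal (c / 4) = ∫⁻ _ in Ioo (3 / 4 : ℝ) 1, ENNReal.ofReal c := by
        rw [setLIntegral_const, Real.volume_Ioo, ← ENNReal.ofReal_mul' (by norm_num)]
        norm_num [div_eq_mul_inv]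
    _ ≤ ∫⁻ t in Ioo (3 / 4 : ℝ) 1, ENNReal.ofReal ((f (a + t • (b - a)))⁻¹) :=
        setLIntegral_mono' measurableSet_Ioo fun t ht => ENNReal.ofReal_le_ofReal (hc t ht)
    _ ≤ ∫⁻ t in Ioo (0 : ℝ) 1, ENNReal.ofReal ((f (a + t • (b - a)))⁻¹) :=
        lintegral_mono_set (Ioo_subset_Ioo (by norm_num) le_rfl)

lemma exists_ofReal_sub_le_segLen {α a₀ M : ℝ} (hα : α < 1) (ha₀ : 0 < a₀) (hM : 0 < M)
    (hμ : ∀ z, a₀ * ‖z‖ ≤ μ z) (hfpos : ∀ z, z ≠ 0 → 0 < f z)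
    (hf : ∀ z, z ≠ 0 → f z ≤ M * ‖z‖ ^ α) :
    ∃ C : ℝ, 0 < C ∧ ∀ a b : EuclideanSpace ℝ (Fin d),
      ENNReal.ofReal (C * ‖b‖ ^ (1 - α) - C * ‖a‖ ^ (1 - α)) ≤ segLen μ f a b := by
  set q := M⁻¹ * min 1 (2 ^ α)
  have hq : 0 < q := mul_pos (inv_pos.2 hM) (lt_min one_pos (Real.rpow_pos_of_pos two_pos α))
  refine ⟨a₀ * q / (4 * max 1 (1 - α)), by positivity, fun a b => ?_⟩
  rcases le_or_gt ‖b‖ ‖a‖ with hba | hab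
  · rw [ENNReal.ofReal_of_nonpos (sub_nonpos.2 (by gcongr))]
    exact zero_le
  have hb : 0 < ‖b‖ := (norm_nonneg a).trans_lt hab
  have hc : ∀ t ∈ Ioo (3 / 4 : ℝ) 1, q * ‖b‖ ^ (-α) ≤ (f (a + t • (b - a)))⁻¹ := by
    intro t ht
    have hw := norm_add_smul_sub_mem_Icc hab.le (Ioo_subset_Icc_self ht)
    have hw₀ : a + t • (b - a) ≠ 0 := norm_pos_iff.1 (by linarith [hw.1])
    calc q * ‖b‖ ^ (-α) = M⁻¹ * (min 1 (2 ^ α) * ‖b‖ ^ (-α)) := mul_assoc _ _ _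
      _ ≤ M⁻¹ * ‖a + t • (b - a)‖ ^ (-α) := by
          gcongr; exact min_one_two_rpow_mul_rpow_neg_le hb hw
      _ = (M * ‖a + t • (b - a)‖ ^ α)⁻¹ := by
          rw [Real.rpow_neg (norm_nonneg _), mul_inv]
      _ ≤ (f (a + t • (b - a)))⁻¹ := inv_anti₀ (hfpos _ hw₀) (hf _ hw₀)
  refine le_trans ?_ (ofReal_mul_le_segLen hc)
  rw [← ENNReal.ofReal_mul ((mul_nonneg ha₀.le (norm_nonneg _)).trans (hμ _))]
  refine ENNReal.ofReal_le_ofReal ?_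
  calc a₀ * q / (4 * max 1 (1 - α)) * ‖b‖ ^ (1 - α) - a₀ * q / (4 * max 1 (1 - α)) * ‖a‖ ^ (1 - α)
      = a₀ * q / (4 * max 1 (1 - α)) * (‖b‖ ^ (1 - α) - ‖a‖ ^ (1 - α)) := by ring
    _ ≤ a₀ * q / (4 * max 1 (1 - α)) * (max 1 (1 - α) * (‖b‖ - ‖a‖) * ‖b‖ ^ (1 - α - 1)) := by
        gcongr; exact rpow_sub_rpow_le (norm_nonneg a) hab.le (by linarith)
    _ = a₀ * (‖b‖ - ‖a‖) * (q * ‖b‖ ^ (-α) / 4) := by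
        rw [sub_sub_cancel_left]; field_simp
    _ ≤ μ (b - a) * (q * ‖b‖ ^ (-α) / 4) := by
        gcongr
        exact (mul_le_mul_of_nonneg_left (norm_sub_norm_le b a) ha₀.le).trans (hμ _)

end Segments

theorem stmt5_general (d : ℕ) (α : ℝ) (hα : α < 1)
    (f₀ : EuclideanSpace ℝ (Fin d) → ℝ) (K : NNReal)
    (hLip : LipschitzOnWith K f₀ (sphere (0 : EuclideanSpace ℝ (Fin d)) 1))
    (hpos : ∀ z ∈ sphere (0 : EuclideanSpace ℝ (Fin d)) 1, 0 < f₀ z)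
    (f : EuclideanSpace ℝ (Fin d) → ℝ)
    (hf : ∀ z : EuclideanSpace ℝ (Fin d), z ≠ 0 → f z = ‖z‖ ^ α * f₀ (‖z‖⁻¹ • z))
    (μ : EuclideanSpace ℝ (Fin d) → ℝ)
    (hμ_add : ∀ z w, μ (z + w) ≤ μ z + μ w)
    (hμ_smul : ∀ (c : ℝ) z, μ (c • z) = |c| * μ z)
    (hμ_eq : ∀ z, μ z = 0 ↔ z = 0) :
    ∃ c : ℝ, 1 < c ∧ ∀ r : ℝ, 0 < r →
      closedBall (0 : EuclideanSpace ℝ (Fin d)) (c⁻¹ * r ^ ((1 : ℝ) / (1 - α))) ⊆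
        {z : EuclideanSpace ℝ (Fin d) | Dmet μ f 0 z ≤ ENNReal.ofReal r} ∧
      {z : EuclideanSpace ℝ (Fin d) | Dmet μ f 0 z ≤ ENNReal.ofReal r} ⊆
        closedBall (0 : EuclideanSpace ℝ (Fin d)) (c * r ^ ((1 : ℝ) / (1 - α))) := by
  obtain ⟨a₀, b₀, ha₀, hμ⟩ : ∃ a b : ℝ, 0 < a ∧ ∀ z, a * ‖z‖ ≤ μ z ∧ μ z ≤ b * ‖z‖ :=
    (Seminorm.of μ hμ_add hμ_smul).exists_mul_norm_le_le_mul_norm fun z => (hμ_eq z).1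
  obtain ⟨m, M, hm, hM, hfb⟩ := exists_mul_rpow_le_le_mul_rpow hLip.continuousOn hpos hf
  obtain ⟨C, hC, hseg⟩ := exists_ofReal_sub_le_segLen hα ha₀ hM (fun z => (hμ z).1)
    (fun z hz => (mul_pos hm (Real.rpow_pos_of_pos (norm_pos_iff.2 hz) α)).trans_le (hfb z hz).1)
    (fun z hz => (hfb z hz).2)
  refine exists_closedBall_subset_and_subset_closedBall (Dmet μ f 0) (by linarith) hC
    (fun z => (Dmet_le_segLen_s5 0 z).trans (segLen_zero_le hα hm (fun z => (hμ z).2)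
      (fun z hz => (hfb z hz).1) z)) (fun z => ?_)
  simpa [Real.zero_rpow (by linarith : 1 - α ≠ 0)] using ofReal_sub_le_Dmet hseg 0 z

theorem stmt5 (d : ℕ) (hd : 0 < d) (α : ℝ) (hα : α < 1)
    (f₀ : EuclideanSpace ℝ (Fin d) → ℝ) (K : NNReal)
    (hLip : LipschitzOnWith K f₀ (sphere (0 : EuclideanSpace ℝ (Fin d)) 1))
    (hpos : ∀ z ∈ sphere (0 : EuclideanSpace ℝ (Fin d)) 1, 0 < f₀ z)
    (f : EuclideanSpace ℝ (Fin d) → ℝ) (hf0 : f 0 = 0)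
    (hf : ∀ z : EuclideanSpace ℝ (Fin d), z ≠ 0 → f z = ‖z‖ ^ α * f₀ (‖z‖⁻¹ • z))
    (μ : EuclideanSpace ℝ (Fin d) → ℝ)
    (hμ_add : ∀ z w, μ (z + w) ≤ μ z + μ w)
    (hμ_smul : ∀ (c : ℝ) z, μ (c • z) = |c| * μ z)
    (hμ_eq : ∀ z, μ z = 0 ↔ z = 0) :
    ∃ c : ℝ, 1 < c ∧ ∀ r : ℝ, 0 < r →
      closedBall (0 : EuclideanSpace ℝ (Fin d)) (c⁻¹ * r ^ ((1 : ℝ) / (1 - α))) ⊆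
        {z : EuclideanSpace ℝ (Fin d) | Dmet μ f 0 z ≤ ENNReal.ofReal r} ∧
      {z : EuclideanSpace ℝ (Fin d) | Dmet μ f 0 z ≤ ENNReal.ofReal r} ⊆
        closedBall (0 : EuclideanSpace ℝ (Fin d)) (c * r ^ ((1 : ℝ) / (1 - α))) :=
  stmt5_general d α hα f₀ K hLip hpos f hf μ hμ_add hμ_smul hμ_eq
end

section
/- For every q > 1, the Euclidean distance from the set Q_s to the set q·(∂Q_s ∖ (P_x ∪ P_{−x})) is at least ρ̄ · s · (q−1). -/
open MeasureTheory Metric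
open scoped ENNReal NNReal Pointwise RealInnerProductSpace

/-!
Write a point of the lateral boundary of `Q_s` as `y = s • z' + t' • x` with `|t'| < 1`, and a
point of `Q_s` as `s • z + t • x`, where `z, z' ∈ Q ⊆ x⊥`. By Pythagoras the distance from
`s • z + t • x` to `q • y` is at least `s * ‖z - q • z'‖`. If `‖z - q • z'‖ < ‖x‖ (q - 1)`, then
`u := (q • z' - z) / (q - 1)` lies strictly inside the ball of radius `‖x‖ = ρ̄` in `x⊥`, hence in `Q`,
and `z' = q⁻¹ • z + (1 - q⁻¹) • u` is a convex combination giving `z'` a whole neighbourhood in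
`Q ∩ x⊥`. Together with `|t'| < 1` this puts `y` in the interior of `Q_s`, a contradiction.
-/

open Set

variable {E : Type*} [NormedAddCommGroup E] [InnerProductSpace ℝ E]

lemma norm_le_norm_add_of_inner_eq_zero {v w : E} (h : ⟪v, w⟫ = 0) : ‖v‖ ≤ ‖v + w‖ := by
  have := norm_add_sq_eq_norm_sq_add_norm_sq_real h
  nlinarith [norm_nonneg (v + w), norm_nonneg v, sq_nonneg ‖w‖]

lemma inner_sub_inner_div_norm_sq_smul_self (e : E) {x : E} (hx : x ≠ 0) :
    ⟪e - (⟪e, x⟫ / ‖x‖ ^ 2) • x, x⟫ = 0 := by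
  rw [inner_sub_left, real_inner_smul_left, real_inner_self_eq_norm_sq]
  field_simp
  ring

lemma abs_inner_div_norm_sq_le (e x : E) : |⟪e, x⟫ / ‖x‖ ^ 2| ≤ ‖e‖ / ‖x‖ := by
  rcases eq_or_ne x 0 with rfl | hx
  · simp
  have hx' : 0 < ‖x‖ := norm_pos_iff.2 hx
  rw [abs_div, abs_of_pos (pow_pos hx' 2), div_le_div_iff₀ (pow_pos hx' 2) hx']
  nlinarith [abs_real_inner_le_norm e x]

lemma inner_smul_add_smul_self {z x : E} (hz : ⟪z, x⟫ = 0) (s t : ℝ) :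
    ⟪s • z + t • x, x⟫ = t * ‖x‖ ^ 2 := by
  rw [inner_add_left, real_inner_smul_left, real_inner_smul_left, hz,
    real_inner_self_eq_norm_sq, mul_zero, zero_add]

def axisCylinder (s : ℝ) (Q : Set E) (x : E) : Set E :=
  {y | ∃ z ∈ Q, ∃ t ∈ Icc (-1 : ℝ) 1, y = s • z + t • x}

lemma isCompact_axisCylinder (s : ℝ) {Q : Set E} (hQ : IsCompact Q) (x : E) :
    IsCompact (axisCylinder s Q x) := by
  have : axisCylinder s Q x = (fun p : E × ℝ => s • p.1 + p.2 • x) '' (Q ×ˢ Icc (-1) 1) := by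
    ext y
    simp only [axisCylinder, mem_image, mem_prod, Prod.exists]
    exact ⟨fun ⟨z, hz, t, ht, h⟩ => ⟨z, t, ⟨hz, ht⟩, h.symm⟩,
      fun ⟨z, t, ⟨hz, ht⟩, h⟩ => ⟨z, hz, t, ht, h.symm⟩⟩
  rw [this]
  exact (hQ.prod isCompact_Icc).image (by fun_prop)

lemma abs_lt_one_of_inner_sub_ne_zero_of_inner_add_ne_zero {z x : E} (hz : ⟪z, x⟫ = 0)
    {s t : ℝ} (ht : t ∈ Icc (-1 : ℝ) 1) (hsub : ⟪s • z + t • x - x, x⟫ ≠ 0)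
    (hadd : ⟪s • z + t • x + x, x⟫ ≠ 0) : |t| < 1 := by
  rw [inner_sub_left, inner_smul_add_smul_self hz, real_inner_self_eq_norm_sq] at hsub
  rw [inner_add_left, inner_smul_add_smul_self hz, real_inner_self_eq_norm_sq] at hadd
  refine abs_lt.2 ⟨ht.1.lt_of_ne ?_, ht.2.lt_of_ne ?_⟩ <;> rintro rfl
  · exact hadd (by ring)
  · exact hsub (by ring)

section CrossSection

variable {Q : Set E} {x : E}

lemma smul_add_smul_mem_interior_axisCylinder (hx : x ≠ 0) {s : ℝ} (hs : 0 < s) {z : E}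
    {r t : ℝ} (hr : 0 < r) (hdisc : ∀ v, ⟪v, x⟫ = 0 → ‖v‖ ≤ r → z + v ∈ Q) (ht : |t| < 1) :
    s • z + t • x ∈ interior (axisCylinder s Q x) := by
  have hx' : 0 < ‖x‖ := norm_pos_iff.2 hx
  -- A displacement `e` splits as `(e - c • x) + c • x`: the first part is absorbed by the disc,
  -- the second by the slack `1 - |t|` along the axis.
  refine mem_interior.2 ⟨ball (s • z + t • x) (min (s * r) ((1 - |t|) * ‖x‖)),
    fun y hy => ?_, isOpen_ball, mem_ball_self (lt_min (by positivity) (by nlinarith))⟩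
  set e := y - (s • z + t • x)
  set c := ⟪e, x⟫ / ‖x‖ ^ 2
  have he : ‖e‖ < min (s * r) ((1 - |t|) * ‖x‖) := mem_ball_iff_norm.1 hy
  have hperp : ⟪e - c • x, x⟫ = 0 := inner_sub_inner_div_norm_sq_smul_self e hx
  have hperp_norm : ‖e - c • x‖ ≤ ‖e‖ := by
    simpa using norm_le_norm_add_of_inner_eq_zero
      (show ⟪e - c • x, c • x⟫ = 0 by rw [real_inner_smul_right, hperp, mul_zero])
  have hc : |c| < 1 - |t| := by
    calc |c| ≤ ‖e‖ / ‖x‖ := abs_inner_div_norm_sq_le e x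
      _ < 1 - |t| := by rw [div_lt_iff₀ hx']; exact he.trans_le (min_le_right _ _)
  refine ⟨z + s⁻¹ • (e - c • x), hdisc _ ?_ ?_, t + c, ?_, ?_⟩
  · rw [real_inner_smul_left, hperp, mul_zero]
  · rw [norm_smul, Real.norm_eq_abs, abs_inv, abs_of_pos hs, inv_mul_le_iff₀ hs]
    exact hperp_norm.trans (he.le.trans (min_le_left _ _))
  · exact abs_le.1 ((abs_add_le t c).trans (by linarith))
  · rw [smul_add, smul_smul, mul_inv_cancel₀ hs.ne', one_smul, add_smul]
    simp only [e]
    abel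

variable (hQplane : ∀ z ∈ Q, ⟪z, x⟫ = 0) (hQconv : Convex ℝ Q)
  (hQball : ∀ w : E, ‖w‖ ≤ ‖x‖ → ⟪w, x⟫ = 0 → w ∈ Q)
include hQconv hQball

lemma add_mem_of_convex_combination {z u v : E} (hz : z ∈ Q) (hu : ⟪u, x⟫ = 0)
    (hv : ⟪v, x⟫ = 0) {a b : ℝ} (ha : 0 ≤ a) (hb : 0 < b) (hab : a + b = 1)
    (hvu : ‖v‖ ≤ b * (‖x‖ - ‖u‖)) : a • z + b • u + v ∈ Q := by
  have hw : u + b⁻¹ • v ∈ Q := by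
    refine hQball _ ?_ ?_
    · calc ‖u + b⁻¹ • v‖ ≤ ‖u‖ + b⁻¹ * ‖v‖ := by
            simpa [norm_smul, abs_of_pos hb] using norm_add_le u (b⁻¹ • v)
        _ ≤ ‖u‖ + b⁻¹ * (b * (‖x‖ - ‖u‖)) := by gcongr
        _ = ‖x‖ := by field_simp; ring
    · rw [inner_add_left, real_inner_smul_left, hu, hv, mul_zero, add_zero]
  convert hQconv hz hw ha hb.le hab using 1
  rw [smul_add, smul_smul, mul_inv_cancel₀ hb.ne', one_smul, add_assoc]

include hQplane in
lemma mul_sub_one_le_norm_sub_smul_of_mem_frontier (hx : x ≠ 0) {s q : ℝ} (hs : 0 < s)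
    (hq : 1 < q) {z z' : E} (hz : z ∈ Q) (hz' : z' ∈ Q) {t' : ℝ} (ht' : |t'| < 1)
    (hfr : s • z' + t' • x ∈ frontier (axisCylinder s Q x)) :
    ‖x‖ * (q - 1) ≤ ‖z - q • z'‖ := by
  by_contra! hlt
  have hq0 : 0 < q - 1 := by linarith
  set u := (q - 1)⁻¹ • (q • z' - z)
  have hu : ⟪u, x⟫ = 0 := by
    rw [real_inner_smul_left, inner_sub_left, real_inner_smul_left, hQplane z hz,
      hQplane z' hz']
    ring
  have hux : ‖u‖ < ‖x‖ := by
    rwa [norm_smul, norm_inv, Real.norm_eq_abs, abs_of_pos hq0, norm_sub_rev, inv_mul_lt_iff₀ hq0,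
      mul_comm]
  have hz'_comb : q⁻¹ • z + (1 - q⁻¹) • u = z' := by
    simp only [u, smul_smul, smul_sub]
    match_scalars
    · field_simp
      ring
    · field_simp
  have hdisc : ∀ v, ⟪v, x⟫ = 0 → ‖v‖ ≤ (1 - q⁻¹) * (‖x‖ - ‖u‖) → z' + v ∈ Q := by
    intro v hv hvn
    rw [← hz'_comb]
    exact add_mem_of_convex_combination hQconv hQball hz hu hv (by positivity)
      (by simp [inv_lt_one_of_one_lt₀ hq]) (by ring) hvn
  have hr : 0 < (1 - q⁻¹) * (‖x‖ - ‖u‖) :=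
    mul_pos (by simp [inv_lt_one_of_one_lt₀ hq]) (by linarith)
  exact hfr.2 (smul_add_smul_mem_interior_axisCylinder hx hs hr hdisc ht')

end CrossSection

lemma mul_norm_sub_smul_le_dist {z z' x : E} (hz : ⟪z, x⟫ = 0) (hz' : ⟪z', x⟫ = 0) {s : ℝ}
    (hs : 0 ≤ s) (q t t' : ℝ) :
    s * ‖z - q • z'‖ ≤ dist (s • z + t • x) (q • (s • z' + t' • x)) := by
  have hsplit : s • z + t • x - q • (s • z' + t' • x) = s • (z - q • z') + (t - q * t') • x := by
    module
  have hperp : ⟪s • (z - q • z'), (t - q * t') • x⟫ = 0 := by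
    rw [real_inner_smul_left, real_inner_smul_right, inner_sub_left, real_inner_smul_left, hz, hz']
    ring
  calc s * ‖z - q • z'‖ = ‖s • (z - q • z')‖ := by rw [norm_smul, Real.norm_of_nonneg hs]
    _ ≤ _ := norm_le_norm_add_of_inner_eq_zero hperp
    _ = _ := by rw [dist_eq_norm, hsplit]

theorem stmt9_general (d : ℕ)
    (μ : EuclideanSpace ℝ (Fin d) → ℝ)
    (hμ_eq : ∀ z, μ z = 0 ↔ z = 0)
    (ρ : ℝ)
    (x : EuclideanSpace ℝ (Fin d)) (hx1 : μ x = 1) (hx2 : ‖x‖ = ρ)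
    (s : ℝ) (hs : 1 < s)
    (Q : Set (EuclideanSpace ℝ (Fin d)))
    (hQplane : ∀ z ∈ Q, ⟪z, x⟫ = 0)
    (hQcomp : IsCompact Q) (hQconv : Convex ℝ Q)
    (hQball : ∀ z : EuclideanSpace ℝ (Fin d), ‖z‖ ≤ ρ → ⟪z, x⟫ = 0 → z ∈ Q)
    (Qs : Set (EuclideanSpace ℝ (Fin d)))
    (hQs : Qs = {y | ∃ z ∈ Q, ∃ t ∈ Set.Icc (-1 : ℝ) 1, y = s • z + t • x})
    (Px Pnx : Set (EuclideanSpace ℝ (Fin d)))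
    (hPx : Px = {z | ⟪z - x, x⟫ = 0}) (hPnx : Pnx = {z | ⟪z + x, x⟫ = 0}) :
    ∀ q : ℝ, 1 < q → ∀ a ∈ Qs, ∀ b ∈ q • (frontier Qs \ (Px ∪ Pnx)),
      ρ * s * (q - 1) ≤ dist a b := by
  rintro q hq a ha _ ⟨y, ⟨hyfr, hyP⟩, rfl⟩
  subst hx2 hQs hPx hPnx
  have hx : x ≠ 0 := fun h => by simp [(hμ_eq x).2 h] at hx1
  have hs0 : 0 < s := by linarith
  obtain ⟨z', hz', t', ht', rfl⟩ := (isCompact_axisCylinder s hQcomp x).isClosed.frontier_subset hyfr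
  obtain ⟨z, hz, t, -, rfl⟩ := ha
  have ht'1 : |t'| < 1 := abs_lt_one_of_inner_sub_ne_zero_of_inner_add_ne_zero (hQplane z' hz') ht'
    (fun h => hyP (Or.inl h)) (fun h => hyP (Or.inr h))
  calc ‖x‖ * s * (q - 1) = s * (‖x‖ * (q - 1)) := by ring
    _ ≤ s * ‖z - q • z'‖ := by
      gcongr
      exact mul_sub_one_le_norm_sub_smul_of_mem_frontier hQplane hQconv hQball hx hs0 hq hz hz'
        ht'1 hyfr
    _ ≤ _ := mul_norm_sub_smul_le_dist (hQplane z hz) (hQplane z' hz') hs0.le q t t'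

theorem stmt9 (d : ℕ) (hd : 0 < d)
    (μ : EuclideanSpace ℝ (Fin d) → ℝ)
    (hμ_add : ∀ z w, μ (z + w) ≤ μ z + μ w)
    (hμ_smul : ∀ (c : ℝ) z, μ (c • z) = |c| * μ z)
    (hμ_eq : ∀ z, μ z = 0 ↔ z = 0)
    (ρ : ℝ) (hρ : IsLUB {r : ℝ | ∃ z : EuclideanSpace ℝ (Fin d), z ≠ 0 ∧ r = ‖z‖ / μ z} ρ)
    (x : EuclideanSpace ℝ (Fin d)) (hx1 : μ x = 1) (hx2 : ‖x‖ = ρ)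
    (s : ℝ) (hs : 1 < s)
    (Q : Set (EuclideanSpace ℝ (Fin d)))
    (hQplane : ∀ z ∈ Q, ⟪z, x⟫ = 0)
    (hQcomp : IsCompact Q) (hQconv : Convex ℝ Q)
    (hQsymm : ∀ z ∈ Q, -z ∈ Q)
    (hQball : ∀ z : EuclideanSpace ℝ (Fin d), ‖z‖ ≤ ρ → ⟪z, x⟫ = 0 → z ∈ Q)
    (Qs : Set (EuclideanSpace ℝ (Fin d)))
    (hQs : Qs = {y | ∃ z ∈ Q, ∃ t ∈ Set.Icc (-1 : ℝ) 1, y = s • z + t • x})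
    (Px Pnx : Set (EuclideanSpace ℝ (Fin d)))
    (hPx : Px = {z | ⟪z - x, x⟫ = 0}) (hPnx : Pnx = {z | ⟪z + x, x⟫ = 0}) :
    ∀ q : ℝ, 1 < q → ∀ a ∈ Qs, ∀ b ∈ q • (frontier Qs \ (Px ∪ Pnx)),
      ρ * s * (q - 1) ≤ dist a b :=
  stmt9_general d μ hμ_eq ρ x hx1 hx2 s hs Q hQplane hQcomp hQconv hQball Qs hQs Px Pnx hPx hPnx
end

section
/- For every q > 1, the Euclidean distance between ∂Q_s and q·∂Q_s equals ρ̄·(q−1). Moreover, if z ∈ ∂Q_s and w ∈ q·∂Q_s satisfy |w−z| = ρ̄·(q−1), then z ∈ P_x ∪ P_{−x}, and w = z + (q−1)·x if z ∈ P_x, while w = z − (q−1)·x if z ∈ P_{−x}. -/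
open Metric Topology
open scoped Pointwise RealInnerProductSpace

/-! The cylinder `C = Q_s` is convex and contains the closed ball of radius `ρ = ‖x‖`. For `z ∈ C`,
`y ∈ ∂C` and `q > 1` put `v = (q y - z) / (q - 1)`: then `y = q⁻¹ z + (1 - q⁻¹) v`, so `v` is not
an interior point of `C`, whence `‖q y - z‖ ≥ ρ (q - 1)`, with equality only if `v ∈ ∂C` and
`‖v‖ = ρ`. Since `s > 1`, the lateral surface of `C` lies outside the ball, so `v = ±x`. Finally
`q y = z ± (q - 1) x` lies on `q ∂C` only if `z` is on the top (resp. bottom) face: otherwise `y`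
has a neighbourhood in `C`, because `q⁻¹` times the base of `C` has a relative neighbourhood of size
`(1 - q⁻¹) ρ` in the base. -/

section Convex

variable {E : Type*} [NormedAddCommGroup E] [NormedSpace ℝ E] {K : Set E} {y z v : E} {q ρ : ℝ}

theorem Convex.mem_interior_of_smul_eq_add_smul (hK : Convex ℝ K) (hz : z ∈ K)
    (hv : v ∈ interior K) (hq : 1 < q) (h : q • y = z + (q - 1) • v) : y ∈ interior K := by
  have hq0 : q ≠ 0 := by positivity
  have hy : y = q⁻¹ • z + (1 - q⁻¹) • v := by
    rw [← inv_smul_smul₀ hq0 y, h]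
    match_scalars <;> field_simp
  rw [hy]
  exact hK.combo_self_interior_mem_interior hz hv (by positivity)
    (sub_pos.2 (inv_lt_one_of_one_lt₀ hq)) (by ring)

theorem smul_eq_add_smul_inv_smul_sub (hq : 1 < q) :
    q • y = z + (q - 1) • ((q - 1)⁻¹ • (q • y - z)) := by
  rw [smul_inv_smul₀ (sub_ne_zero.2 hq.ne')]
  abel

theorem norm_inv_smul_sub_eq (hq : 1 < q) :
    ‖(q - 1)⁻¹ • (q • y - z)‖ = dist z (q • y) / (q - 1) := by
  rw [norm_smul, Real.norm_eq_abs, abs_inv, abs_of_pos (sub_pos.2 hq), dist_comm, dist_eq_norm,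
    inv_mul_eq_div]

theorem Convex.mul_sub_one_le_dist_smul (hK : Convex ℝ K) (hball : closedBall 0 ρ ⊆ K)
    (hz : z ∈ K) (hy : y ∈ frontier K) (hq : 1 < q) : ρ * (q - 1) ≤ dist z (q • y) := by
  by_contra! hlt
  have hv : (q - 1)⁻¹ • (q • y - z) ∈ ball 0 ρ := by
    rw [mem_ball_zero_iff, norm_inv_smul_sub_eq hq, div_lt_iff₀ (sub_pos.2 hq)]
    exact hlt
  exact hy.2 <| hK.mem_interior_of_smul_eq_add_smul hz
    (interior_maximal (ball_subset_closedBall.trans hball) isOpen_ball hv) hq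
    (smul_eq_add_smul_inv_smul_sub hq)

theorem Convex.exists_mem_frontier_of_dist_smul_eq (hK : Convex ℝ K)
    (hball : closedBall 0 ρ ⊆ K) (hz : z ∈ K) (hy : y ∈ frontier K) (hq : 1 < q)
    (hd : dist z (q • y) = ρ * (q - 1)) :
    ∃ v ∈ frontier K, ‖v‖ = ρ ∧ q • y = z + (q - 1) • v := by
  have hvn : ‖(q - 1)⁻¹ • (q • y - z)‖ = ρ := by
    rw [norm_inv_smul_sub_eq hq, hd, mul_div_cancel_right₀ _ (sub_ne_zero.2 hq.ne')]
  refine ⟨_, ⟨subset_closure (hball (mem_closedBall_zero_iff.2 hvn.le)), fun hv => ?_⟩, hvn,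
    smul_eq_add_smul_inv_smul_sub hq⟩
  exact hy.2 (hK.mem_interior_of_smul_eq_add_smul hz hv hq (smul_eq_add_smul_inv_smul_sub hq))

end Convex

section Orthogonal

variable {E : Type*} [NormedAddCommGroup E] [InnerProductSpace ℝ E] {x p : E}

theorem norm_smul_add_smul_sq (hp : ⟪p, x⟫ = 0) (s t : ℝ) :
    ‖s • p + t • x‖ ^ 2 = s ^ 2 * ‖p‖ ^ 2 + t ^ 2 * ‖x‖ ^ 2 := by
  rw [norm_add_sq_real, real_inner_smul_left, real_inner_smul_right, hp, norm_smul, norm_smul,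
    Real.norm_eq_abs, Real.norm_eq_abs, mul_pow, mul_pow, sq_abs, sq_abs]
  ring

theorem inner_smul_add_smul_left (hp : ⟪p, x⟫ = 0) (s t : ℝ) :
    ⟪s • p + t • x, x⟫ = t * ‖x‖ ^ 2 := by
  rw [inner_add_left, real_inner_smul_left, real_inner_smul_left, hp, real_inner_self_eq_norm_sq]
  ring

theorem inner_sub_self_eq_zero_iff {z : E} : ⟪z - x, x⟫ = 0 ↔ ⟪z, x⟫ = ‖x‖ ^ 2 := by
  rw [inner_sub_left, real_inner_self_eq_norm_sq, sub_eq_zero]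

theorem inner_add_self_eq_zero_iff {z : E} : ⟪z + x, x⟫ = 0 ↔ ⟪z, x⟫ = -‖x‖ ^ 2 := by
  rw [inner_add_left, real_inner_self_eq_norm_sq, add_eq_zero_iff_eq_neg]

theorem exists_inner_eq_zero_and_eq_add_smul (hx : x ≠ 0) (e : E) :
    ∃ p : E, ∃ c : ℝ, ⟪p, x⟫ = 0 ∧ e = p + c • x ∧ ‖p‖ ≤ ‖e‖ ∧ |c| * ‖x‖ ≤ ‖e‖ := by
  set c := ⟪e, x⟫ / ‖x‖ ^ 2
  have hp : ⟪e - c • x, x⟫ = 0 := by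
    rw [inner_sub_left, real_inner_smul_left, real_inner_self_eq_norm_sq]
    simp only [c]
    field_simp [norm_ne_zero_iff.2 hx]
    ring
  have he : e = (e - c • x) + c • x := (sub_add_cancel e _).symm
  have hsq := norm_smul_add_smul_sq hp 1 c
  rw [one_smul, ← he, one_pow, one_mul] at hsq
  refine ⟨e - c • x, c, hp, he, ?_, ?_⟩
  · refine (pow_le_pow_iff_left₀ (norm_nonneg _) (norm_nonneg _) two_ne_zero).1 ?_
    rw [hsq]
    exact le_add_of_nonneg_right (by positivity)
  · refine (pow_le_pow_iff_left₀ (by positivity) (norm_nonneg _) two_ne_zero).1 ?_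
    rw [hsq, mul_pow, sq_abs]
    exact le_add_of_nonneg_left (by positivity)

end Orthogonal

section Cylinder

variable {E : Type*} [NormedAddCommGroup E] [InnerProductSpace ℝ E] {Q : Set E} {a b v y z : E}
  {s t u δ l q ε : ℝ} {x : E}

def rightCylinder (Q : Set E) (s : ℝ) (x : E) : Set E :=
  {y | ∃ z ∈ Q, ∃ t ∈ Set.Icc (-1 : ℝ) 1, y = s • z + t • x}

theorem isCompact_rightCylinder (hQ : IsCompact Q) : IsCompact (rightCylinder Q s x) := by
  have : rightCylinder Q s x = (fun p : E × ℝ => s • p.1 + p.2 • x) '' (Q ×ˢ Set.Icc (-1) 1) := by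
    ext y
    constructor
    · rintro ⟨z, hz, t, ht, rfl⟩
      exact ⟨(z, t), ⟨hz, ht⟩, rfl⟩
    · rintro ⟨⟨z, t⟩, ⟨hz, ht⟩, rfl⟩
      exact ⟨z, hz, t, ht, rfl⟩
  rw [this]
  exact (hQ.prod isCompact_Icc).image (by fun_prop)

theorem convex_rightCylinder (hQ : Convex ℝ Q) : Convex ℝ (rightCylinder Q s x) := by
  rintro _ ⟨z₁, hz₁, t₁, ht₁, rfl⟩ _ ⟨z₂, hz₂, t₂, ht₂, rfl⟩ a b ha hb hab
  refine ⟨a • z₁ + b • z₂, hQ hz₁ hz₂ ha hb hab, a * t₁ + b * t₂,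
    convex_Icc (-1 : ℝ) 1 ht₁ ht₂ ha hb hab, ?_⟩
  module

theorem closedBall_subset_rightCylinder (hs : 1 ≤ s) (hx : x ≠ 0)
    (hQball : ∀ z : E, ‖z‖ ≤ ‖x‖ → ⟪z, x⟫ = 0 → z ∈ Q) :
    closedBall 0 ‖x‖ ⊆ rightCylinder Q s x := by
  intro y hy
  rw [mem_closedBall_zero_iff] at hy
  obtain ⟨p, c, hp, rfl, hpn, hcn⟩ := exists_inner_eq_zero_and_eq_add_smul hx y
  have hs0 : 0 < s := by linarith
  refine ⟨s⁻¹ • p, hQball _ ?_ ?_, c, ?_, ?_⟩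
  · rw [norm_smul, Real.norm_eq_abs, abs_inv, abs_of_pos hs0]
    exact (mul_le_of_le_one_left (norm_nonneg _) (inv_le_one_of_one_le₀ hs)).trans (hpn.trans hy)
  · rw [real_inner_smul_left, hp, mul_zero]
  · exact abs_le.1 ((mul_le_iff_le_one_left (norm_pos_iff.2 hx)).1 (hcn.trans hy))
  · rw [smul_inv_smul₀ hs0.ne']

theorem smul_add_smul_mem_interior_rightCylinder (hs : 0 < s) (hx : x ≠ 0) (hδ : 0 < δ)
    (hb : ∀ h : E, ‖h‖ ≤ δ → ⟪h, x⟫ = 0 → b + h ∈ Q) (hu : |u| < 1) :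
    s • b + u • x ∈ interior (rightCylinder Q s x) := by
  have hx0 : 0 < ‖x‖ := norm_pos_iff.2 hx
  refine mem_interior.2 ⟨ball (s • b + u • x) (min (s * δ) (‖x‖ * (1 - |u|))), fun y hy => ?_,
    isOpen_ball, mem_ball_self (lt_min (by positivity) (mul_pos hx0 (by linarith)))⟩
  rw [mem_ball, dist_eq_norm, lt_min_iff] at hy
  obtain ⟨p, c, hp, hpc, hpn, hcn⟩ := exists_inner_eq_zero_and_eq_add_smul hx (y - (s • b + u • x))
  have hc : |c| < 1 - |u| :=
    lt_of_mul_lt_mul_right ((hcn.trans_lt hy.2).trans_eq (mul_comm _ _)) hx0.le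
  refine ⟨b + s⁻¹ • p, hb _ ?_ ?_, u + c, ?_, ?_⟩
  · rw [norm_smul, Real.norm_eq_abs, abs_inv, abs_of_pos hs, inv_mul_le_iff₀ hs]
    exact hpn.trans hy.1.le
  · rw [real_inner_smul_left, hp, mul_zero]
  · exact abs_le.1 ((abs_add_le u c).trans (by linarith))
  · rw [smul_add, smul_inv_smul₀ hs.ne']
    linear_combination (norm := module) hpc

theorem inner_le_of_mem_rightCylinder (hQx : ∀ z ∈ Q, ⟪z, x⟫ = 0)
    (hy : y ∈ rightCylinder Q s x) : ⟪y, x⟫ ≤ ‖x‖ ^ 2 := by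
  obtain ⟨z, hz, t, ht, rfl⟩ := hy
  rw [inner_smul_add_smul_left (hQx z hz)]
  exact mul_le_of_le_one_left (by positivity) ht.2

theorem self_mem_frontier_rightCylinder (hx : x ≠ 0) (h0 : 0 ∈ Q)
    (hQx : ∀ z ∈ Q, ⟪z, x⟫ = 0) : x ∈ frontier (rightCylinder Q s x) := by
  refine ⟨subset_closure ⟨0, h0, 1, by norm_num, by simp⟩, fun hint => ?_⟩
  have hlim : Filter.Tendsto (fun ε : ℝ => (1 + ε) • x) (𝓝[>] 0) (𝓝 x) := by
    have hcont : Continuous fun ε : ℝ => (1 + ε) • x := by fun_prop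
    exact (hcont.tendsto' 0 x (by simp)).mono_left nhdsWithin_le_nhds
  obtain ⟨ε, hεC, hε⟩ :=
    ((hlim.eventually (mem_interior_iff_mem_nhds.1 hint)).and self_mem_nhdsWithin).exists
  have := inner_le_of_mem_rightCylinder hQx hεC
  rw [real_inner_smul_left, real_inner_self_eq_norm_sq] at this
  linarith [mul_pos (Set.mem_Ioi.1 hε) (pow_pos (norm_pos_iff.2 hx) 2)]

theorem eq_or_eq_neg_of_mem_frontier_rightCylinder (hs : 1 < s) (hx : x ≠ 0)
    (hQx : ∀ z ∈ Q, ⟪z, x⟫ = 0) (hQball : ∀ z : E, ‖z‖ ≤ ‖x‖ → ⟪z, x⟫ = 0 → z ∈ Q)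
    (hv : v ∈ frontier (rightCylinder Q s x)) (hvn : ‖v‖ = ‖x‖) : v = x ∨ v = -x := by
  obtain ⟨b, hb, u, hu, rfl⟩ :=
    closedBall_subset_rightCylinder hs.le hx hQball (mem_closedBall_zero_iff.2 hvn.le)
  have hpyth : s ^ 2 * ‖b‖ ^ 2 + u ^ 2 * ‖x‖ ^ 2 = ‖x‖ ^ 2 := by
    rw [← norm_smul_add_smul_sq (hQx b hb), hvn]
  have hu1 : |u| = 1 := by
    refine (abs_le.2 hu).eq_of_not_lt fun hult => hv.2 ?_
    have hbx : ‖b‖ < ‖x‖ := by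
      refine (pow_lt_pow_iff_left₀ (norm_nonneg _) (norm_nonneg _) two_ne_zero).1 ?_
      nlinarith [one_lt_pow₀ hs two_ne_zero, pow_pos (norm_pos_iff.2 hx) 2,
        mul_nonneg (sq_nonneg u) (sq_nonneg ‖x‖)]
    refine smul_add_smul_mem_interior_rightCylinder (by linarith) hx (sub_pos.2 hbx)
      (fun h hh hhx => hQball _ ((norm_add_le _ _).trans (by linarith)) ?_) hult
    rw [inner_add_left, hQx b hb, hhx, add_zero]
  have hb0 : b = 0 := by
    rw [← sq_abs u, hu1, one_pow, one_mul, add_eq_right] at hpyth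
    simpa [(by linarith : s ≠ 0)] using hpyth
  rcases (abs_eq zero_le_one).1 hu1 with rfl | rfl <;> simp [hb0]

theorem Convex.smul_add_mem_of_norm_le (hQ : Convex ℝ Q)
    (hQball : ∀ z : E, ‖z‖ ≤ ‖x‖ → ⟪z, x⟫ = 0 → z ∈ Q) (ha : a ∈ Q) (hl : l ∈ Set.Ico 0 1)
    {h : E} (hh : ‖h‖ ≤ (1 - l) * ‖x‖) (hhx : ⟪h, x⟫ = 0) : l • a + h ∈ Q := by
  have hl1 : 0 < 1 - l := sub_pos.2 hl.2
  have hmem : (1 - l)⁻¹ • h ∈ Q := by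
    refine hQball _ ?_ ?_
    · rwa [norm_smul, Real.norm_eq_abs, abs_inv, abs_of_pos hl1, inv_mul_le_iff₀ hl1]
    · rw [real_inner_smul_left, hhx, mul_zero]
  simpa [smul_inv_smul₀ hl1.ne'] using hQ ha hmem hl.1 hl1.le (by ring)

theorem eq_of_smul_mem_frontier_rightCylinder (hs : 0 < s) (hx : x ≠ 0) (hQ : Convex ℝ Q)
    (hQball : ∀ z : E, ‖z‖ ≤ ‖x‖ → ⟪z, x⟫ = 0 → z ∈ Q) (ha : a ∈ Q) (ht : t ∈ Set.Icc (-1) 1)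
    (hε : ε = 1 ∨ ε = -1) (hq : 1 < q) (hy : y ∈ frontier (rightCylinder Q s x))
    (h : q • y = s • a + t • x + ((q - 1) * ε) • x) : t = ε := by
  by_contra hne
  have hq0 : 0 < q := by linarith
  have hyeq : y = s • (q⁻¹ • a) + ((t + (q - 1) * ε) / q) • x := by
    rw [← inv_smul_smul₀ hq0.ne' y, h]
    match_scalars <;> field_simp
  have hlevel : |(t + (q - 1) * ε) / q| < 1 := by
    rw [abs_div, abs_of_pos hq0, div_lt_one hq0, abs_lt]
    rcases hε with rfl | rfl
    · have := lt_of_le_of_ne ht.2 hne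
      constructor <;> linarith [ht.1]
    · have := lt_of_le_of_ne' ht.1 hne
      constructor <;> linarith [ht.2]
  refine hy.2 (hyeq ▸ smul_add_smul_mem_interior_rightCylinder hs hx ?_
    (fun h hh hhx => hQ.smul_add_mem_of_norm_le hQball ha ?_ hh hhx) hlevel)
  · exact mul_pos (sub_pos.2 (inv_lt_one_of_one_lt₀ hq)) (norm_pos_iff.2 hx)
  · exact ⟨by positivity, inv_lt_one_of_one_lt₀ hq⟩

theorem eq_add_or_eq_sub_of_dist_smul_eq (hs : 1 < s) (hx : x ≠ 0) (hQ : Convex ℝ Q)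
    (hQx : ∀ z ∈ Q, ⟪z, x⟫ = 0) (hQball : ∀ z : E, ‖z‖ ≤ ‖x‖ → ⟪z, x⟫ = 0 → z ∈ Q)
    (hz : z ∈ rightCylinder Q s x) (hy : y ∈ frontier (rightCylinder Q s x)) (hq : 1 < q)
    (hd : dist z (q • y) = ‖x‖ * (q - 1)) :
    (⟪z, x⟫ = ‖x‖ ^ 2 ∧ q • y = z + (q - 1) • x) ∨
      (⟪z, x⟫ = -‖x‖ ^ 2 ∧ q • y = z - (q - 1) • x) := by
  obtain ⟨v, hv, hvn, hyv⟩ := (convex_rightCylinder hQ).exists_mem_frontier_of_dist_smul_eq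
    (closedBall_subset_rightCylinder hs.le hx hQball) hz hy hq hd
  obtain ⟨a, ha, t, ht, rfl⟩ := hz
  have hinner := inner_smul_add_smul_left (hQx a ha) s t
  have hs0 : 0 < s := by linarith
  rcases eq_or_eq_neg_of_mem_frontier_rightCylinder hs hx hQx hQball hv hvn with rfl | rfl
  · obtain rfl := eq_of_smul_mem_frontier_rightCylinder hs0 hx hQ hQball ha ht (Or.inl rfl) hq hy
      (by rw [hyv]; module)
    exact Or.inl ⟨by rw [hinner, one_mul], hyv⟩
  · obtain rfl := eq_of_smul_mem_frontier_rightCylinder hs0 hx hQ hQball ha ht (Or.inr rfl) hq hy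
      (by rw [hyv]; module)
    exact Or.inr ⟨by rw [hinner, neg_one_mul], by rw [hyv]; module⟩

end Cylinder

theorem stmt10_general (d : ℕ)
    (μ : EuclideanSpace ℝ (Fin d) → ℝ)
    (hμ_eq : ∀ z, μ z = 0 ↔ z = 0)
    (ρ : ℝ)
    (x : EuclideanSpace ℝ (Fin d)) (hx1 : μ x = 1) (hx2 : ‖x‖ = ρ)
    (s : ℝ) (hs : 1 < s)
    (Q : Set (EuclideanSpace ℝ (Fin d)))
    (hQplane : ∀ z ∈ Q, ⟪z, x⟫ = 0)
    (hQcomp : IsCompact Q) (hQconv : Convex ℝ Q)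
    (hQball : ∀ z : EuclideanSpace ℝ (Fin d), ‖z‖ ≤ ρ → ⟪z, x⟫ = 0 → z ∈ Q)
    (Qs : Set (EuclideanSpace ℝ (Fin d)))
    (hQs : Qs = {y | ∃ z ∈ Q, ∃ t ∈ Set.Icc (-1 : ℝ) 1, y = s • z + t • x})
    (Px Pnx : Set (EuclideanSpace ℝ (Fin d)))
    (hPx : Px = {z | ⟪z - x, x⟫ = 0}) (hPnx : Pnx = {z | ⟪z + x, x⟫ = 0}) :
    ∀ q : ℝ, 1 < q →
      IsGLB {r : ℝ | ∃ z ∈ frontier Qs, ∃ w ∈ q • frontier Qs, r = dist z w}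
        (ρ * (q - 1)) ∧
      ∀ z ∈ frontier Qs, ∀ w ∈ q • frontier Qs, dist z w = ρ * (q - 1) →
        z ∈ Px ∪ Pnx ∧ (z ∈ Px → w = z + (q - 1) • x) ∧
          (z ∈ Pnx → w = z - (q - 1) • x) := by
  intro q hq
  have hx : x ≠ 0 := by
    rintro rfl
    simp [(hμ_eq 0).2 rfl] at hx1
  subst hx2 hPx hPnx
  obtain rfl : Qs = rightCylinder Q s x := hQs
  have hfrontier : frontier (rightCylinder Q s x) ⊆ rightCylinder Q s x :=
    (isCompact_rightCylinder hQcomp).isClosed.frontier_subset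
  refine ⟨IsLeast.isGLB ⟨?_, ?_⟩, ?_⟩
  · have hxfr := self_mem_frontier_rightCylinder (s := s) hx (hQball 0 (by simp) (by simp)) hQplane
    refine ⟨x, hxfr, q • x, Set.smul_mem_smul_set hxfr, ?_⟩
    rw [dist_comm, dist_eq_norm, show q • x - x = (q - 1) • x by module, norm_smul,
      Real.norm_eq_abs, abs_of_pos (by linarith), mul_comm]
  · rintro r ⟨z, hz, _, ⟨y, hy, rfl⟩, rfl⟩
    exact (convex_rightCylinder hQconv).mul_sub_one_le_dist_smul
      (closedBall_subset_rightCylinder hs.le hx hQball) (hfrontier hz) hy hq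
  · rintro z hz _ ⟨y, hy, rfl⟩ hd
    have hxsq := pow_pos (norm_pos_iff.2 hx) 2
    simp only [Set.mem_union, Set.mem_ofPred_eq, inner_sub_self_eq_zero_iff,
      inner_add_self_eq_zero_iff]
    rcases eq_add_or_eq_sub_of_dist_smul_eq hs hx hQconv hQplane hQball (hfrontier hz) hy hq hd
      with ⟨hzx, hyz⟩ | ⟨hzx, hyz⟩
    · exact ⟨Or.inl hzx, fun _ => hyz, fun _ => by linarith⟩
    · exact ⟨Or.inr hzx, fun _ => by linarith, fun _ => hyz⟩

theorem stmt10 (d : ℕ) (hd : 0 < d)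
    (μ : EuclideanSpace ℝ (Fin d) → ℝ)
    (hμ_add : ∀ z w, μ (z + w) ≤ μ z + μ w)
    (hμ_smul : ∀ (c : ℝ) z, μ (c • z) = |c| * μ z)
    (hμ_eq : ∀ z, μ z = 0 ↔ z = 0)
    (ρ : ℝ) (hρ : IsLUB {r : ℝ | ∃ z : EuclideanSpace ℝ (Fin d), z ≠ 0 ∧ r = ‖z‖ / μ z} ρ)
    (x : EuclideanSpace ℝ (Fin d)) (hx1 : μ x = 1) (hx2 : ‖x‖ = ρ)
    (s : ℝ) (hs : 1 < s)
    (Q : Set (EuclideanSpace ℝ (Fin d)))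
    (hQplane : ∀ z ∈ Q, ⟪z, x⟫ = 0)
    (hQcomp : IsCompact Q) (hQconv : Convex ℝ Q)
    (hQsymm : ∀ z ∈ Q, -z ∈ Q)
    (hQball : ∀ z : EuclideanSpace ℝ (Fin d), ‖z‖ ≤ ρ → ⟪z, x⟫ = 0 → z ∈ Q)
    (Qs : Set (EuclideanSpace ℝ (Fin d)))
    (hQs : Qs = {y | ∃ z ∈ Q, ∃ t ∈ Set.Icc (-1 : ℝ) 1, y = s • z + t • x})
    (Px Pnx : Set (EuclideanSpace ℝ (Fin d)))
    (hPx : Px = {z | ⟪z - x, x⟫ = 0}) (hPnx : Pnx = {z | ⟪z + x, x⟫ = 0}) :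
    ∀ q : ℝ, 1 < q →
      IsGLB {r : ℝ | ∃ z ∈ frontier Qs, ∃ w ∈ q • frontier Qs, r = dist z w}
        (ρ * (q - 1)) ∧
      ∀ z ∈ frontier Qs, ∀ w ∈ q • frontier Qs, dist z w = ρ * (q - 1) →
        z ∈ Px ∪ Pnx ∧ (z ∈ Px → w = z + (q - 1) • x) ∧
          (z ∈ Pnx → w = z - (q - 1) • x) :=
  stmt10_general d μ hμ_eq ρ x hx1 hx2 s hs Q hQplane hQcomp hQconv hQball Qs hQs Px Pnx hPx hPnx
end

section
/- Let q > 1. For every z ∈ Q_s and every w ∈ q·(∂Q_s ∖ (P_x ∪ P_{−x})): D(z,w) ≥ (1 + q^{1−α} − 2^α·(q + 1 + s(q−1))^{1−α}) / (κ̄_s·(α−1)). -/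
/-!
Write `ν` for the gauge of `Q_s`. As `Q_s` contains the Euclidean `ρ̄`-ball, `ν ≤ μ`, so on a
path of `μ`-length `T` from `z` (where `ν ≤ 1`) to `w` (where `ν = q`) the point reached after
length `u` satisfies `ν ≤ min (1 + u) (q + T - u)`, while `f⁻¹ ≥ κ̄⁻¹ ν^(-α)` everywhere.
Integrating this tent profile gives `(1 + q^(1-α) - 2^α (q + 1 + T)^(1-α)) / (κ̄ (α - 1))`, which
increases with `T`. Finally `T ≥ μ(w - z) ≥ s (q - 1)`: the gauge of the cylinder `Q + ℝx` is also
at most `μ`, it is at most `s` on `Q_s`, and it is at least `s q` at `w`, because `w / q` lies on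
the lateral face of `Q_s`.
-/

open MeasureTheory Metric
open scoped ENNReal NNReal Pointwise RealInnerProductSpace

open Set
open scoped Topology

section Paths

variable {d : ℕ}

def pathLength (μ : EuclideanSpace ℝ (Fin d) → ℝ) {n : ℕ}
    (p : Fin (n + 1) → EuclideanSpace ℝ (Fin d)) : ℝ :=
  ∑ i : Fin n, μ (p i.succ - p i.castSucc)

lemma pathLength_castSucc (μ : EuclideanSpace ℝ (Fin d) → ℝ) {n : ℕ}
    (p : Fin (n + 2) → EuclideanSpace ℝ (Fin d)) :
    pathLength μ p =
      pathLength μ (fun i : Fin (n + 1) => p i.castSucc) +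
        μ (p (Fin.last (n + 1)) - p (Fin.last n).castSucc) := by
  simp only [pathLength, Fin.sum_univ_castSucc, Fin.succ_last, Fin.succ_castSucc]

lemma seminorm_sub_le_pathLength (μ : Seminorm ℝ (EuclideanSpace ℝ (Fin d))) :
    ∀ {n : ℕ} (p : Fin (n + 1) → EuclideanSpace ℝ (Fin d)),
      μ (p (Fin.last n) - p 0) ≤ pathLength μ p
  | 0, p => by simp [pathLength]
  | n + 1, p => by
    rw [pathLength_castSucc]
    set a := p (Fin.last n).castSucc
    calc μ (p (Fin.last (n + 1)) - p 0) ≤ μ (a - p 0) + μ (p (Fin.last (n + 1)) - a) := by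
          simpa using map_add_le_add μ (a - p 0) (p (Fin.last (n + 1)) - a)
      _ ≤ _ := by
          gcongr
          exact seminorm_sub_le_pathLength μ (fun i : Fin (n + 1) => p i.castSucc)

lemma ofReal_integral_le_segLen {μ : Seminorm ℝ (EuclideanSpace ℝ (Fin d))}
    {f : EuclideanSpace ℝ (Fin d) → ℝ} {ψ : ℝ → ℝ} (hψ : Continuous ψ) (hψ0 : ∀ u, 0 ≤ ψ u)
    {a b : EuclideanSpace ℝ (Fin d)} (c : ℝ)
    (h : ∀ t ∈ Ioo (0 : ℝ) 1, a + t • (b - a) ≠ 0 →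
      ψ (c + μ (b - a) * t) ≤ (f (a + t • (b - a)))⁻¹) :
    ENNReal.ofReal (∫ u in c..c + μ (b - a), ψ u) ≤ segLen μ f a b := by
  rcases eq_or_ne a b with rfl | hab
  · simp
  -- `(f 0)⁻¹ = 0` here, which is why the bound is only assumed off the null set where the
  -- segment passes through `0`.
  have hsub : {t : ℝ | a + t • (b - a) = 0}.Subsingleton := fun t₁ h₁ t₂ h₂ =>
    smul_left_injective ℝ (sub_ne_zero.2 hab.symm) (add_left_cancel (h₁.trans h₂.symm))
  have hae : ∀ᵐ t ∂(volume.restrict (Ioo (0 : ℝ) 1)),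
      ENNReal.ofReal (ψ (c + μ (b - a) * t)) ≤ ENNReal.ofReal ((f (a + t • (b - a)))⁻¹) := by
    have hne : ∀ᵐ t : ℝ, a + t • (b - a) ≠ 0 :=
      measure_eq_zero_iff_ae_notMem.1 (hsub.measure_zero _)
    filter_upwards [ae_restrict_of_ae hne,
      ae_restrict_mem measurableSet_Ioo] with t hne ht
    exact ENNReal.ofReal_le_ofReal (h t ht hne)
  have hint : IntegrableOn (fun t => ψ (c + μ (b - a) * t)) (Ioo 0 1) :=
    (by fun_prop : Continuous fun t => ψ (c + μ (b - a) * t)).integrableOn_Icc.mono_set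
      Ioo_subset_Icc_self
  calc ENNReal.ofReal (∫ u in c..c + μ (b - a), ψ u)
      = ENNReal.ofReal (μ (b - a) * ∫ t in Ioo 0 1, ψ (c + μ (b - a) * t)) := by
        rw [← intervalIntegral.integral_of_le zero_le_one |>.trans
          integral_Ioc_eq_integral_Ioo, ← smul_eq_mul,
          intervalIntegral.smul_integral_comp_add_mul, mul_zero, mul_one, add_zero]
    _ = ENNReal.ofReal (μ (b - a)) *
          ∫⁻ t in Ioo 0 1, ENNReal.ofReal (ψ (c + μ (b - a) * t)) := by
        rw [ENNReal.ofReal_mul (apply_nonneg μ _),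
          ofReal_integral_eq_lintegral_ofReal hint
            (Filter.Eventually.of_forall fun t => hψ0 _)]
    _ ≤ segLen μ f a b := mul_le_mul' le_rfl (lintegral_mono_ae hae)

lemma ofReal_integral_le_sum_segLen {μ : Seminorm ℝ (EuclideanSpace ℝ (Fin d))}
    {f : EuclideanSpace ℝ (Fin d) → ℝ} {ψ : ℝ → ℝ} (hψ : Continuous ψ) (hψ0 : ∀ u, 0 ≤ ψ u) :
    ∀ {n : ℕ} (p : Fin (n + 1) → EuclideanSpace ℝ (Fin d)),
      (∀ y ≠ 0, ∀ u, μ (y - p 0) ≤ u → μ (p (Fin.last n) - y) ≤ pathLength μ p - u →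
        ψ u ≤ (f y)⁻¹) →
      ENNReal.ofReal (∫ u in (0 : ℝ)..pathLength μ p, ψ u) ≤
        ∑ i : Fin n, segLen μ f (p i.castSucc) (p i.succ)
  | 0, p, _ => by simp [pathLength]
  | n + 1, p, h => by
    set p' : Fin (n + 1) → EuclideanSpace ℝ (Fin d) := fun i => p i.castSucc
    set a := p (Fin.last n).castSucc
    set b := p (Fin.last (n + 1))
    have hlen : pathLength μ p = pathLength μ p' + μ (b - a) := pathLength_castSucc μ p
    have hstart : μ (a - p 0) ≤ pathLength μ p' := seminorm_sub_le_pathLength μ p'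
    have h' : ∀ y ≠ 0, ∀ u, μ (y - p' 0) ≤ u → μ (p' (Fin.last n) - y) ≤ pathLength μ p' - u →
        ψ u ≤ (f y)⁻¹ := fun y hy u h₁ h₂ => h y hy u h₁ <| by
      calc μ (b - y) ≤ μ (b - a) + μ (a - y) := by
            simpa using map_add_le_add μ (b - a) (a - y)
        _ ≤ pathLength μ p - u := by rw [hlen]; linarith
    have hlast : ENNReal.ofReal (∫ u in pathLength μ p'..pathLength μ p' + μ (b - a), ψ u) ≤
        segLen μ f a b := by
      refine ofReal_integral_le_segLen hψ hψ0 _ fun t ht hy => h _ hy _ ?_ ?_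
      · calc μ (a + t • (b - a) - p 0) ≤ μ (a - p 0) + μ (t • (b - a)) := by
              simpa [add_sub_right_comm] using map_add_le_add μ (a - p 0) (t • (b - a))
          _ = μ (a - p 0) + μ (b - a) * t := by
              rw [map_smul_eq_mul, Real.norm_of_nonneg ht.1.le, mul_comm]
          _ ≤ _ := by linarith
      · have : b - (a + t • (b - a)) = (1 - t) • (b - a) := by module
        rw [this, map_smul_eq_mul, Real.norm_of_nonneg (by linarith [ht.2]), hlen]
        linarith
    have hnonneg : ∀ {x y : ℝ}, x ≤ y → 0 ≤ ∫ u in x..y, ψ u := fun hxy =>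
      intervalIntegral.integral_nonneg hxy fun u _ => hψ0 u
    rw [Fin.sum_univ_castSucc, hlen, ← intervalIntegral.integral_add_adjacent_intervals
      (b := pathLength μ p') (hψ.intervalIntegrable _ _) (hψ.intervalIntegrable _ _),
      ENNReal.ofReal_add (hnonneg ((apply_nonneg μ _).trans hstart))
        (hnonneg (le_add_of_nonneg_right (apply_nonneg μ _)))]
    exact add_le_add (ofReal_integral_le_sum_segLen hψ hψ0 p' h') hlast

end Paths

/-- The bound `min (1 + u) (q + T - u)` on `ν` at length `u`; the `max` with `1` does not change
it on `[0, T]` and keeps it positive everywhere. -/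
def tent (q T u : ℝ) : ℝ := max (min (1 + u) (q + T - u)) 1

lemma one_le_tent (q T u : ℝ) : 1 ≤ tent q T u := le_max_right _ _

lemma continuous_tent_rpow (q T α : ℝ) : Continuous fun u => tent q T u ^ α := by
  unfold tent
  exact Continuous.rpow_const (by fun_prop) fun u => .inl (by positivity)

lemma integral_tent_rpow {q T α : ℝ} (hq : 1 ≤ q) (hT : q - 1 ≤ T) (hα : α ≠ 1) :
    ∫ u in (0 : ℝ)..T, tent q T u ^ (-α) =
      (1 + q ^ (1 - α) - 2 ^ α * (q + 1 + T) ^ (1 - α)) / (α - 1) := by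
  set m := (T + q - 1) / 2 with hm
  have hα' : -α ≠ -1 := by contrapose! hα; linarith
  have hleft : ∫ u in (0 : ℝ)..m, tent q T u ^ (-α) = ∫ u in (0 : ℝ)..m, (1 + u) ^ (-α) := by
    refine intervalIntegral.integral_congr fun u hu => ?_
    rw [uIcc_of_le (by linarith)] at hu
    rw [tent, min_eq_left (by linarith [hu.2]), max_eq_left (by linarith [hu.1])]
  have hright : ∫ u in m..T, tent q T u ^ (-α) = ∫ u in m..T, (q + T - u) ^ (-α) := by
    refine intervalIntegral.integral_congr fun u hu => ?_
    rw [uIcc_of_le (by linarith)] at hu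
    rw [tent, min_eq_right (by linarith [hu.1]), max_eq_left (by linarith [hu.2])]
  have h2 : 2 ^ α * (q + 1 + T) ^ (1 - α) = 2 * (1 + m) ^ (1 - α) := by
    rw [show 1 + m = (q + 1 + T) / 2 by ring, Real.div_rpow (by linarith) zero_le_two,
      Real.rpow_sub zero_lt_two, Real.rpow_one]
    field_simp
  rw [← intervalIntegral.integral_add_adjacent_intervals (b := m)
      ((continuous_tent_rpow q T _).intervalIntegrable _ _)
      ((continuous_tent_rpow q T _).intervalIntegrable _ _), hleft, hright,
    intervalIntegral.integral_comp_add_left (fun u => u ^ (-α)),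
    intervalIntegral.integral_comp_sub_left (fun u => u ^ (-α)),
    integral_rpow (.inr ⟨hα', notMem_uIcc_of_lt (by linarith) (by linarith)⟩),
    integral_rpow (.inr ⟨hα', notMem_uIcc_of_lt (by linarith) (by linarith)⟩), h2,
    show q + T - m = 1 + m by ring]
  rw [add_zero, Real.one_rpow, add_sub_cancel_right, neg_add_eq_sub]
  have : α - 1 ≠ 0 := sub_ne_zero.2 hα
  have : 1 - α ≠ 0 := sub_ne_zero.2 hα.symm
  field_simp
  ring

theorem le_Dmet_of_potential {d : ℕ} {μ : Seminorm ℝ (EuclideanSpace ℝ (Fin d))}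
    {f N : EuclideanSpace ℝ (Fin d) → ℝ} {κ α q L : ℝ} (hκ : 0 < κ) (hα : 1 < α) (hq : 1 ≤ q)
    (hN : ∀ a b, N a ≤ N b + μ (a - b)) (hNpos : ∀ y ≠ 0, 0 < N y)
    (hf : ∀ y ≠ 0, κ⁻¹ * N y ^ (-α) ≤ (f y)⁻¹) {z w : EuclideanSpace ℝ (Fin d)}
    (hz : N z ≤ 1) (hw : N w ≤ q) (hL : q - 1 ≤ L) (hLzw : L ≤ μ (w - z)) :
    ENNReal.ofReal ((1 + q ^ (1 - α) - 2 ^ α * (q + 1 + L) ^ (1 - α)) / (κ * (α - 1))) ≤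
      Dmet μ f z w := by
  refine le_iInf fun n => le_iInf fun p => le_iInf fun hp0 => le_iInf fun hpn => ?_
  subst hp0 hpn
  set T := pathLength μ p
  have hLT : L ≤ T := hLzw.trans (seminorm_sub_le_pathLength μ p)
  have hbound : (1 + q ^ (1 - α) - 2 ^ α * (q + 1 + L) ^ (1 - α)) / (κ * (α - 1)) ≤
      ∫ u in (0 : ℝ)..T, κ⁻¹ * tent q T u ^ (-α) := by
    rw [intervalIntegral.integral_const_mul, integral_tent_rpow hq (hL.trans hLT) hα.ne',
      ← div_eq_inv_mul, div_div, mul_comm (α - 1)]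
    have : (q + 1 + T) ^ (1 - α) ≤ (q + 1 + L) ^ (1 - α) :=
      Real.rpow_le_rpow_of_nonpos (by linarith) (by linarith) (by linarith)
    gcongr ?_ / _
    nlinarith [Real.rpow_pos_of_pos two_pos α]
  refine (ENNReal.ofReal_le_ofReal hbound).trans <|
    ofReal_integral_le_sum_segLen (continuous_const.mul (continuous_tent_rpow q T _))
      (fun u => mul_nonneg (by positivity)
        (Real.rpow_nonneg (zero_le_one.trans (one_le_tent q T u)) _)) p fun y hy u hu₁ hu₂ => ?_
  have hNy : N y ≤ tent q T u := by
    refine le_max_of_le_left (le_min ?_ ?_)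
    · linarith [hN y (p 0)]
    · linarith [hN y (p (Fin.last n)), map_sub_rev μ y (p (Fin.last n))]
  exact (mul_le_mul_of_nonneg_left
    (Real.rpow_le_rpow_of_nonpos (hNpos y hy) hNy (by linarith)) (by positivity)).trans (hf y hy)

section Gauge

variable {E : Type*} [AddCommGroup E] [Module ℝ E]

lemma gauge_le_gauge_add_seminorm {S : Set E} (μ : Seminorm ℝ E) (hS : Convex ℝ S)
    (hμS : μ.ball 0 1 ⊆ S) (a b : E) : gauge S a ≤ gauge S b + μ (a - b) :=
  calc gauge S a = gauge S (b + (a - b)) := by rw [add_sub_cancel]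
    _ ≤ gauge S b + gauge S (a - b) :=
        gauge_add_le hS ((μ.absorbent_ball_zero one_pos).mono hμS) _ _
    _ ≤ gauge S b + μ (a - b) := by
        grw [gauge_mono (μ.absorbent_ball_zero one_pos) hμS (a - b), μ.gauge_ball]

end Gauge

section Prism

variable {E : Type*} [NormedAddCommGroup E] [InnerProductSpace ℝ E] {Q : Set E} {x : E} {s : ℝ}

def prism (Q : Set E) (x : E) (s : ℝ) : Set E :=
  {y | ∃ z ∈ Q, ∃ t ∈ Icc (-1 : ℝ) 1, y = s • z + t • x}

def cylinder (Q : Set E) (x : E) : Set E :=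
  {y | ∃ z ∈ Q, ∃ t : ℝ, y = z + t • x}

lemma Convex.prism (hQ : Convex ℝ Q) : Convex ℝ (prism Q x s) := by
  rintro _ ⟨z₁, hz₁, t₁, ht₁, rfl⟩ _ ⟨z₂, hz₂, t₂, ht₂, rfl⟩ a b ha hb hab
  refine ⟨a • z₁ + b • z₂, hQ hz₁ hz₂ ha hb hab, a * t₁ + b * t₂,
    convex_Icc (-1 : ℝ) 1 ht₁ ht₂ ha hb hab, by module⟩

lemma Convex.cylinder (hQ : Convex ℝ Q) : Convex ℝ (cylinder Q x) := by
  rintro _ ⟨z₁, hz₁, t₁, rfl⟩ _ ⟨z₂, hz₂, t₂, rfl⟩ a b ha hb hab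
  exact ⟨a • z₁ + b • z₂, hQ hz₁ hz₂ ha hb hab, a * t₁ + b * t₂, by module⟩

lemma IsCompact.prism (hQ : IsCompact Q) : IsCompact (prism Q x s) := by
  have : _root_.prism Q x s = (fun p : E × ℝ => s • p.1 + p.2 • x) '' (Q ×ˢ Icc (-1) 1) := by
    ext y
    simp [_root_.prism, eq_comm, and_assoc]
  rw [this]
  exact (hQ.prod isCompact_Icc).image (by fun_prop)

lemma exists_orthogonal_decomposition (x y : E) :
    ∃ z : E, ∃ c : ℝ, ⟪z, x⟫ = 0 ∧ ‖z‖ ≤ ‖y‖ ∧ |c| * ‖x‖ ≤ ‖y‖ ∧ y = z + c • x := by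
  rcases eq_or_ne x 0 with rfl | hx
  · exact ⟨y, 0, by simp⟩
  set c := ⟪y, x⟫ / ‖x‖ ^ 2 with hc
  have horth : ⟪y - c • x, x⟫ = 0 := by
    rw [inner_sub_left, real_inner_smul_left, real_inner_self_eq_norm_sq, hc,
      div_mul_cancel₀ _ (by positivity), sub_self]
  have hpyth : ‖y‖ ^ 2 = ‖y - c • x‖ ^ 2 + ‖c • x‖ ^ 2 := by
    have := norm_add_sq_real (y - c • x) (c • x)
    rw [sub_add_cancel, real_inner_smul_right, horth] at this
    linarith
  refine ⟨y - c • x, c, horth, ?_, ?_, by abel⟩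
  · exact (pow_le_pow_iff_left₀ (norm_nonneg _) (norm_nonneg _) two_ne_zero).1 (by nlinarith)
  · rw [← Real.norm_eq_abs, ← norm_smul]
    exact (pow_le_pow_iff_left₀ (norm_nonneg _) (norm_nonneg _) two_ne_zero).1 (by nlinarith)

lemma closedBall_subset_prism (hQ : ∀ z, ‖z‖ ≤ ‖x‖ → ⟪z, x⟫ = 0 → z ∈ Q) (hx : x ≠ 0)
    (hs : 1 ≤ s) :
    closedBall 0 ‖x‖ ⊆ prism Q x s := by
  intro y hy
  rw [mem_closedBall_zero_iff] at hy
  obtain ⟨z, c, hzx, hz, hc, rfl⟩ := exists_orthogonal_decomposition x y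
  have hs₀ : 0 < s := by linarith
  refine ⟨s⁻¹ • z, hQ _ ?_ (by rw [real_inner_smul_left, hzx, mul_zero]), c, ?_, ?_⟩
  · rw [norm_smul, Real.norm_of_nonneg (inv_nonneg.2 hs₀.le)]
    exact (mul_le_of_le_one_left (norm_nonneg z) (inv_le_one_of_one_le₀ hs)).trans (hz.trans hy)
  · exact abs_le.1 (le_of_mul_le_mul_right (by linarith) (norm_pos_iff.2 hx))
  · rw [smul_inv_smul₀ hs₀.ne']

lemma closedBall_subset_cylinder (hQ : ∀ z, ‖z‖ ≤ ‖x‖ → ⟪z, x⟫ = 0 → z ∈ Q) :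
    closedBall 0 ‖x‖ ⊆ cylinder Q x := by
  intro y hy
  rw [mem_closedBall_zero_iff] at hy
  obtain ⟨z, c, hzx, hz, -, rfl⟩ := exists_orthogonal_decomposition x y
  exact ⟨z, hQ z (hz.trans hy) hzx, c, rfl⟩

lemma gauge_cylinder_le_of_mem_prism (hs : 0 < s) {y : E} (hy : y ∈ prism Q x s) :
    gauge (cylinder Q x) y ≤ s := by
  obtain ⟨z, hz, t, -, rfl⟩ := hy
  refine gauge_le_of_mem hs.le ⟨z + (t / s) • x, ⟨z, hz, t / s, rfl⟩, ?_⟩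
  simp only [smul_add, smul_smul, mul_div_cancel₀ t hs.ne']

lemma abs_lt_one_of_notMem_caps {z : E} (hz : ⟪z, x⟫ = 0) {t : ℝ}
    (ht : t ∈ Icc (-1 : ℝ) 1) (h₁ : ⟪s • z + t • x - x, x⟫ ≠ 0)
    (h₂ : ⟪s • z + t • x + x, x⟫ ≠ 0) : |t| < 1 := by
  simp only [inner_add_left, inner_sub_left, real_inner_smul_left, hz, mul_zero, zero_add] at h₁ h₂
  refine abs_lt.2 ⟨ht.1.lt_of_ne ?_, ht.2.lt_of_ne ?_⟩
  · rintro rfl; simp at h₂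
  · rintro rfl; simp at h₁

lemma le_gauge_cylinder (hQx : ∀ z ∈ Q, ⟪z, x⟫ = 0) (hQ : Convex ℝ Q) (hQ₀ : 0 ∈ Q)
    (hx : x ≠ 0) (hs : 0 < s) (habs : Absorbent ℝ (cylinder Q x)) {z : E} (hz : z ∈ Q) {t : ℝ}
    (ht : |t| < 1) (hw : gauge (prism Q x s) (s • z + t • x) = 1) :
    s ≤ gauge (cylinder Q x) (s • z + t • x) := by
  -- If `w ∈ r • cylinder Q x` with `r < s`, then `w ∈ β • prism Q x s` for
  -- `β = max (r / s) |t| < 1`, contradicting `gauge (prism Q x s) w = 1`.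
  by_contra! hlt
  obtain ⟨r, hr, hrs, _, ⟨z', hz', t', rfl⟩, heq⟩ := exists_lt_of_gauge_lt habs hlt
  dsimp only at heq
  have ht' : r * t' = t := by
    have := congrArg (⟪·, x⟫) heq
    simp only [inner_add_left, real_inner_smul_left, smul_add, hQx z hz, hQx z' hz', mul_zero,
      zero_add, smul_smul] at this
    exact mul_right_cancel₀ (inner_self_ne_zero.2 hx) this
  have hz'z : r • z' = s • z := by
    rw [smul_add, smul_smul, ht'] at heq
    exact add_right_cancel heq
  set β := max (r / s) |t|
  have hβ : 0 < β := (div_pos hr hs).trans_le (le_max_left _ _)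
  have hβ1 : β < 1 := max_lt ((div_lt_one hs).2 hrs) ht
  have hmem : s • z + t • x ∈ β • prism Q x s := by
    refine ⟨s • ((r / (s * β)) • z') + (t / β) • x, ⟨_, hQ.smul_mem_of_zero_mem hQ₀ hz'
      ⟨by positivity, ?_⟩, t / β, abs_le.1 ?_, rfl⟩, ?_⟩
    · rw [div_le_one (by positivity), ← div_le_iff₀' hs]
      exact le_max_left _ _
    · rw [abs_div, abs_of_pos hβ, div_le_one hβ]
      exact le_max_right _ _
    · dsimp only
      rw [← hz'z, smul_add, smul_smul, smul_smul, smul_smul]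
      congr 2 <;> field_simp
  linarith [gauge_le_of_mem hβ.le hmem]

lemma mul_sub_one_le_seminorm_sub (μ : Seminorm ℝ E) (hQ : Convex ℝ Q)
    (hcyl : μ.ball 0 1 ⊆ cylinder Q x) (hs : 0 < s) {q : ℝ} (hq : 0 ≤ q) {z w : E}
    (hz : z ∈ prism Q x s) (hw : s ≤ gauge (cylinder Q x) w) : s * (q - 1) ≤ μ (q • w - z) := by
  have := gauge_le_gauge_add_seminorm μ hQ.cylinder hcyl (q • w) z
  rw [gauge_smul_of_nonneg hq, smul_eq_mul] at this
  nlinarith [gauge_cylinder_le_of_mem_prism hs hz]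

end Prism

section Potential

variable {E : Type*} [NormedAddCommGroup E] [NormedSpace ℝ E]

lemma Seminorm.ball_zero_one_subset_closedBall (μ : Seminorm ℝ E) (hμ : ∀ v, μ v = 0 → v = 0)
    {ρ : ℝ} (hρ₀ : 0 ≤ ρ) (hρ : ∀ v ≠ 0, ‖v‖ / μ v ≤ ρ) : μ.ball 0 1 ⊆ Metric.closedBall 0 ρ := by
  intro v hv
  rw [Seminorm.mem_ball_zero] at hv
  rw [mem_closedBall_zero_iff]
  rcases eq_or_ne v 0 with rfl | hv₀
  · simpa using hρ₀
  have hμv : 0 < μ v := (apply_nonneg μ v).lt_of_ne fun h => hv₀ (hμ v h.symm)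
  calc ‖v‖ ≤ ρ * μ v := (div_le_iff₀ hμv).1 (hρ v hv₀)
    _ ≤ ρ := mul_le_of_le_one_right hρ₀ hv.le

lemma inv_mul_gauge_rpow_le_inv {S : Set E} (hS : Convex ℝ S) (hS₀ : S ∈ 𝓝 0)
    (hSb : Bornology.IsVonNBounded ℝ S) {fs f : E → ℝ} {κ α : ℝ}
    (hpos : ∀ z ∈ frontier S, 0 < fs z) (hle : ∀ z ∈ frontier S, fs z ≤ κ)
    (hf : ∀ y ≠ 0, f y = gauge S y ^ α * fs ((gauge S y)⁻¹ • y)) {y : E} (hy : y ≠ 0) :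
    κ⁻¹ * gauge S y ^ (-α) ≤ (f y)⁻¹ := by
  have hg : 0 < gauge S y := (gauge_pos (absorbent_nhds_zero hS₀) hSb).2 hy
  have hfr : (gauge S y)⁻¹ • y ∈ frontier S := by
    rw [← gauge_eq_one_iff_mem_frontier hS hS₀, gauge_smul_of_nonneg (inv_nonneg.2 hg.le),
      smul_eq_mul, inv_mul_cancel₀ hg.ne']
  rw [hf y hy, mul_inv, ← Real.rpow_neg hg.le, mul_comm]
  exact mul_le_mul_of_nonneg_left (inv_anti₀ (hpos _ hfr) (hle _ hfr)) (Real.rpow_nonneg hg.le _)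

end Potential

theorem stmt15_general (d : ℕ)
    (μ : EuclideanSpace ℝ (Fin d) → ℝ)
    (hμ_add : ∀ z w, μ (z + w) ≤ μ z + μ w)
    (hμ_smul : ∀ (c : ℝ) z, μ (c • z) = |c| * μ z)
    (hμ_eq : ∀ z, μ z = 0 ↔ z = 0)
    (ρ : ℝ) (hρ : IsLUB {r : ℝ | ∃ z : EuclideanSpace ℝ (Fin d), z ≠ 0 ∧ r = ‖z‖ / μ z} ρ)
    (x : EuclideanSpace ℝ (Fin d)) (hx1 : μ x = 1) (hx2 : ‖x‖ = ρ)
    (s : ℝ) (hs : 1 < s)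
    (Q : Set (EuclideanSpace ℝ (Fin d)))
    (hQplane : ∀ z ∈ Q, ⟪z, x⟫ = 0)
    (hQcomp : IsCompact Q) (hQconv : Convex ℝ Q)
    (hQball : ∀ z : EuclideanSpace ℝ (Fin d), ‖z‖ ≤ ρ → ⟪z, x⟫ = 0 → z ∈ Q)
    (Qs : Set (EuclideanSpace ℝ (Fin d)))
    (hQs : Qs = {y | ∃ z ∈ Q, ∃ t ∈ Set.Icc (-1 : ℝ) 1, y = s • z + t • x})
    (Px Pnx : Set (EuclideanSpace ℝ (Fin d)))
    (hPx : Px = {z | ⟪z - x, x⟫ = 0}) (hPnx : Pnx = {z | ⟪z + x, x⟫ = 0})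
    (α : ℝ) (hα : 1 < α)
    (fs : EuclideanSpace ℝ (Fin d) → ℝ)
    (hfspos : ∀ z ∈ frontier Qs, 0 < fs z)
    (κ : ℝ) (hκ : IsLUB (fs '' frontier Qs) κ)
    (f : EuclideanSpace ℝ (Fin d) → ℝ)
    (hf : ∀ z : EuclideanSpace ℝ (Fin d), z ≠ 0 →
      f z = gauge Qs z ^ α * fs ((gauge Qs z)⁻¹ • z))
    (q : ℝ) (hq : 1 < q) :
    ∀ z ∈ Qs, ∀ w ∈ q • (frontier Qs \ (Px ∪ Pnx)),
      ENNReal.ofReal ((1 + q ^ (1 - α) - 2 ^ α * (q + 1 + s * (q - 1)) ^ (1 - α)) /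
          (κ * (α - 1))) ≤ Dmet μ f z w := by
  rintro z hz _ ⟨w, ⟨hw, hcaps⟩, rfl⟩
  obtain rfl : Qs = prism Q x s := hQs
  subst hx2 hPx hPnx
  let μ' : Seminorm ℝ (EuclideanSpace ℝ (Fin d)) :=
    Seminorm.of μ hμ_add fun c v => by rw [hμ_smul, Real.norm_eq_abs]
  have hx : x ≠ 0 := by rintro rfl; simpa using (map_zero μ').symm.trans hx1
  have hμball : μ'.ball 0 1 ⊆ closedBall 0 ‖x‖ :=
    μ'.ball_zero_one_subset_closedBall (fun v => (hμ_eq v).1) (norm_nonneg x)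
      fun v hv => hρ.1 ⟨v, hv, rfl⟩
  have hball := closedBall_subset_prism hQball hx hs.le
  have hprism₀ : prism Q x s ∈ 𝓝 0 :=
    Filter.mem_of_superset (closedBall_mem_nhds 0 (norm_pos_iff.2 hx)) hball
  have hbdd : Bornology.IsVonNBounded ℝ (prism Q x s) := hQcomp.prism.isVonNBounded ℝ
  have hcyl : μ'.ball 0 1 ⊆ cylinder Q x := hμball.trans (closedBall_subset_cylinder hQball)
  have hw₁ : gauge (prism Q x s) w = 1 := (gauge_eq_one_iff_mem_frontier hQconv.prism hprism₀).2 hw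
  obtain ⟨z₀, hz₀, t₀, ht₀, rfl⟩ := hQcomp.prism.isClosed.frontier_subset hw
  have hlateral : s ≤ gauge (cylinder Q x) (s • z₀ + t₀ • x) :=
    le_gauge_cylinder hQplane hQconv (hQball 0 (by simp) (by simp)) hx (by linarith)
      ((μ'.absorbent_ball_zero one_pos).mono hcyl) hz₀
      (abs_lt_one_of_notMem_caps (hQplane z₀ hz₀) ht₀ (hcaps <| .inl ·) (hcaps <| .inr ·)) hw₁
  exact le_Dmet_of_potential (μ := μ') ((hfspos _ hw).trans_le (hκ.1 ⟨_, hw, rfl⟩)) hα hq.le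
    (gauge_le_gauge_add_seminorm μ' hQconv.prism (hμball.trans hball))
    (fun y hy => (gauge_pos (absorbent_nhds_zero hprism₀) hbdd).2 hy)
    (fun y => inv_mul_gauge_rpow_le_inv hQconv.prism hprism₀ hbdd hfspos
      (fun y hy => hκ.1 ⟨y, hy, rfl⟩) hf)
    (gauge_le_one_of_mem hz) (by rw [gauge_smul_of_nonneg (by linarith), hw₁, smul_eq_mul, mul_one])
    (by nlinarith)
    (mul_sub_one_le_seminorm_sub μ' hQconv hcyl (by linarith) (by linarith) hz hlateral)

theorem stmt15 (d : ℕ) (hd : 0 < d)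
    (μ : EuclideanSpace ℝ (Fin d) → ℝ)
    (hμ_add : ∀ z w, μ (z + w) ≤ μ z + μ w)
    (hμ_smul : ∀ (c : ℝ) z, μ (c • z) = |c| * μ z)
    (hμ_eq : ∀ z, μ z = 0 ↔ z = 0)
    (ρ : ℝ) (hρ : IsLUB {r : ℝ | ∃ z : EuclideanSpace ℝ (Fin d), z ≠ 0 ∧ r = ‖z‖ / μ z} ρ)
    (x : EuclideanSpace ℝ (Fin d)) (hx1 : μ x = 1) (hx2 : ‖x‖ = ρ)
    (s : ℝ) (hs : 1 < s)
    (Q : Set (EuclideanSpace ℝ (Fin d)))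
    (hQplane : ∀ z ∈ Q, ⟪z, x⟫ = 0)
    (hQcomp : IsCompact Q) (hQconv : Convex ℝ Q)
    (hQsymm : ∀ z ∈ Q, -z ∈ Q)
    (hQball : ∀ z : EuclideanSpace ℝ (Fin d), ‖z‖ ≤ ρ → ⟪z, x⟫ = 0 → z ∈ Q)
    (Qs : Set (EuclideanSpace ℝ (Fin d)))
    (hQs : Qs = {y | ∃ z ∈ Q, ∃ t ∈ Set.Icc (-1 : ℝ) 1, y = s • z + t • x})
    (Px Pnx : Set (EuclideanSpace ℝ (Fin d)))
    (hPx : Px = {z | ⟪z - x, x⟫ = 0}) (hPnx : Pnx = {z | ⟪z + x, x⟫ = 0})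
    (α : ℝ) (hα : 1 < α)
    (fs : EuclideanSpace ℝ (Fin d) → ℝ) (K : NNReal)
    (hfsLip : LipschitzOnWith K fs (frontier Qs))
    (hfspos : ∀ z ∈ frontier Qs, 0 < fs z)
    (κ : ℝ) (hκ : IsLUB (fs '' frontier Qs) κ)
    (hfsflat : ∀ z ∈ frontier Qs ∩ (Px ∪ Pnx), fs z = κ)
    (f : EuclideanSpace ℝ (Fin d) → ℝ) (hf0 : f 0 = 0)
    (hf : ∀ z : EuclideanSpace ℝ (Fin d), z ≠ 0 →
      f z = gauge Qs z ^ α * fs ((gauge Qs z)⁻¹ • z))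
    (q : ℝ) (hq : 1 < q) :
    ∀ z ∈ Qs, ∀ w ∈ q • (frontier Qs \ (Px ∪ Pnx)),
      ENNReal.ofReal ((1 + q ^ (1 - α) - 2 ^ α * (q + 1 + s * (q - 1)) ^ (1 - α)) /
          (κ * (α - 1))) ≤ Dmet μ f z w :=
  stmt15_general d μ hμ_add hμ_smul hμ_eq ρ hρ x hx1 hx2 s hs Q hQplane hQcomp hQconv hQball Qs hQs
    Px Pnx hPx hPnx α hα fs hfspos κ hκ f hf q hq
end
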